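/- arXiv:2208.06548 — 7 statements merged into one kernel-verified Lean document; each statement's English description precedes it below -/
import Mathlib

section
/- Let x : ℕ → ℝ be a sequence with x(j) > 0 for all j. Then for every n ≥ 1, δ_n^α (log∘x) ≥ (1/x(n))·δ_n^α x, where log∘x denotes the sequence j ↦ ln x(j). -/
open Filter Finset

/-- L1-scheme coefficient `b_j^{(β)} = (j+1)^β - j^β` (real powers). -/
noncomputable def bcoef (β : ℝ) (j : ℕ) : ℝ := ((j : ℝ) + 1) ^ β - (j : ℝ) ^ β

/-- L1 discretization of the Caputo derivative of order `α` with time step `Δt`,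
evaluated at time level `n ≥ 1`:
`δ_n^α f = ((Δt)^{-α}/Γ(2-α)) (f n - b_{n-1} f 0 - Σ_{j=1}^{n-1} (b_{j-1}-b_j) f (n-j))`. -/
noncomputable def L1 (α Δt : ℝ) (f : ℕ → ℝ) (n : ℕ) : ℝ :=
  Δt ^ (-α) / Real.Gamma (2 - α) *
    (f n - bcoef (1 - α) (n - 1) * f 0 -
      ∑ j ∈ Finset.Icc 1 (n - 1), (bcoef (1 - α) (j - 1) - bcoef (1 - α) j) * f (n - j))

lemma bcoef_nonneg {β : ℝ} (hβ : 0 ≤ β) (j : ℕ) : 0 ≤ bcoef β j := by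
  have := Real.rpow_le_rpow (by positivity : (0:ℝ) ≤ (j:ℝ)) (by linarith : (j:ℝ) ≤ (j:ℝ)+1) hβ
  unfold bcoef; linarith

lemma bcoef_zero {β : ℝ} (hβ : β ≠ 0) : bcoef β 0 = 1 := by
  simp [bcoef, Real.zero_rpow hβ]

lemma bcoef_anti {β : ℝ} (hβ0 : 0 < β) (hβ1 : β < 1) {j : ℕ} (hj : 1 ≤ j) :
    bcoef β j ≤ bcoef β (j - 1) := by
  have hc := (Real.strictConcaveOn_rpow hβ0 hβ1).concaveOn
  have h1 : ((j:ℝ) - 1) ∈ Set.Ici (0:ℝ) := by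
    simp only [Set.mem_Ici]
    have : (1:ℝ) ≤ (j:ℝ) := by exact_mod_cast hj
    linarith
  have h2 : ((j:ℝ) + 1) ∈ Set.Ici (0:ℝ) := by
    simp only [Set.mem_Ici]; positivity
  have key := hc.2 h1 h2 (by norm_num : (0:ℝ) ≤ 1/2) (by norm_num : (0:ℝ) ≤ 1/2)
    (by norm_num : (1:ℝ)/2 + 1/2 = 1)
  have hmid : (1/2 : ℝ) • ((j:ℝ) - 1) + (1/2 : ℝ) • ((j:ℝ) + 1) = (j:ℝ) := by
    simp [smul_eq_mul]; ring
  rw [hmid] at key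
  simp only [smul_eq_mul] at key
  have hcast : ((j - 1 : ℕ) : ℝ) = (j:ℝ) - 1 := by
    have := Nat.cast_sub hj (R := ℝ); simpa using this
  have hcast2 : ((j - 1 : ℕ) : ℝ) + 1 = (j:ℝ) := by rw [hcast]; ring
  unfold bcoef
  rw [hcast2, hcast]
  linarith

lemma tele (b : ℕ → ℝ) (n : ℕ) :
    ∑ j ∈ Finset.Icc 1 n, (b (j - 1) - b j) = b 0 - b n := by
  induction n with
  | zero => simp
  | succ m ih =>
    rw [Finset.sum_Icc_succ_top (by omega : 1 ≤ m + 1), ih]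
    simp

/-- `δ_n^α (log ∘ x) ≥ (1 / x n) · δ_n^α x` for positive sequences. -/
theorem stmt_2 (α Δt : ℝ) (hα0 : 0 < α) (hα1 : α < 1) (hΔt : 0 < Δt)
    (x : ℕ → ℝ) (hx : ∀ j, 0 < x j) (n : ℕ) (hn : 1 ≤ n) :
    (1 / x n) * L1 α Δt x n ≤ L1 α Δt (fun j => Real.log (x j)) n := by
  set β : ℝ := 1 - α with hβ
  have hβ0 : 0 < β := by simp [hβ]; linarith
  have hβ1 : β < 1 := by simp [hβ]; linarith
  set X : ℝ := x n with hXdef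
  have hX : 0 < X := hx n
  set C : ℝ := Δt ^ (-α) / Real.Gamma (2 - α) with hC
  have hC0 : 0 < C := by
    apply div_pos (Real.rpow_pos_of_pos hΔt _)
    exact Real.Gamma_pos_of_pos (by linarith)
  set I := Finset.Icc 1 (n - 1) with hI
  set b : ℝ := bcoef β (n - 1) with hb
  set c : ℕ → ℝ := fun j => bcoef β (j - 1) - bcoef β j with hcdef
  have hb0 : 0 ≤ b := bcoef_nonneg hβ0.le _
  have hc0 : ∀ j ∈ I, 0 ≤ c j := fun j hj => by
    have : 1 ≤ j := (Finset.mem_Icc.mp hj).1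
    exact sub_nonneg.mpr (bcoef_anti hβ0 hβ1 this)
  have hbsum : b + ∑ j ∈ I, c j = 1 := by
    rw [hcdef, hI, tele, bcoef_zero hβ0.ne']
    ring
  -- pointwise log inequality
  set T : ℝ := Real.log X - 1 with hT
  have hpt : ∀ y : ℝ, 0 < y → Real.log y - y / X ≤ T := by
    intro y hy
    have h := Real.log_le_sub_one_of_pos (div_pos hy hX)
    rw [Real.log_div hy.ne' hX.ne'] at h
    rw [hT]; linarith
  -- key inequality on the inner sums
  have hbterm : b * Real.log (x 0) - b * T ≤ b * (x 0 / X) := by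
    have := hpt (x 0) (hx 0)
    nlinarith [mul_le_mul_of_nonneg_left this hb0]
  have hsterm : (∑ j ∈ I, c j * Real.log (x (n - j))) - (∑ j ∈ I, c j) * T ≤
      ∑ j ∈ I, c j * (x (n - j) / X) := by
    have h1 : ∀ j ∈ I, c j * Real.log (x (n - j)) - c j * T ≤ c j * (x (n - j) / X) := by
      intro j hj
      have := hpt (x (n - j)) (hx (n - j))
      nlinarith [mul_le_mul_of_nonneg_left this (hc0 j hj)]
    have := Finset.sum_le_sum h1
    rw [Finset.sum_sub_distrib, ← Finset.sum_mul] at this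
    linarith
  -- split sums / rewrite L1
  have hS : (1 / X) * (∑ j ∈ I, c j * x (n - j)) = ∑ j ∈ I, c j * (x (n - j) / X) := by
    rw [Finset.mul_sum]
    exact Finset.sum_congr rfl fun j _ => by field_simp
  have hXX : (1 / X) * X = 1 := by field_simp
  show (1 / X) * (C * (X - b * x 0 - ∑ j ∈ I, c j * x (n - j))) ≤
      C * (Real.log X - b * Real.log (x 0) - ∑ j ∈ I, c j * Real.log (x (n - j)))
  have key : (1 / X) * (X - b * x 0 - ∑ j ∈ I, c j * x (n - j)) ≤
      Real.log X - b * Real.log (x 0) - ∑ j ∈ I, c j * Real.log (x (n - j)) := by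
    have expand : (1 / X) * (X - b * x 0 - ∑ j ∈ I, c j * x (n - j)) =
        1 - b * (x 0 / X) - ∑ j ∈ I, c j * (x (n - j) / X) := by
      rw [mul_sub, mul_sub, hXX, hS]; ring
    rw [expand]
    have hT1 : Real.log X = T + 1 := by rw [hT]; ring
    have hbsT : b * T + (∑ j ∈ I, c j) * T = T := by
      have := congrArg (· * T) hbsum
      simpa [add_mul] using this
    have hcomb := add_le_add hbterm hsterm
    clear_value X T b
    linarith [hcomb, hbsT]
  calc (1 / X) * (C * (X - b * x 0 - ∑ j ∈ I, c j * x (n - j)))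
      = C * ((1 / X) * (X - b * x 0 - ∑ j ∈ I, c j * x (n - j))) := by ring
    _ ≤ C * (Real.log X - b * Real.log (x 0) - ∑ j ∈ I, c j * Real.log (x (n - j))) :=
        mul_le_mul_of_nonneg_left key hC0.le
end

section
/- (Lemma 2.2) Let x : ℕ → ℝ be a sequence with x(j) > 0 for all j. Then for every n ≥ 1, δ_n^α (j ↦ x(j) − 1 − ln x(j)) ≤ (1 − 1/x(n))·δ_n^α x. -/
open Filter Finset

lemma bcoef_succ_le {β : ℝ} (hβ0 : 0 ≤ β) (hβ1 : β ≤ 1) (j : ℕ) :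
    bcoef β (j + 1) ≤ bcoef β j := by
  have h := (Real.concaveOn_rpow hβ0 hβ1).slope_anti_adjacent (y := (j : ℝ) + 1)
    (Set.mem_Ici.mpr (Nat.cast_nonneg j)) (Set.mem_Ici.mpr (by positivity : (0 : ℝ) ≤ j + 1 + 1))
    (lt_add_one _) (lt_add_one _)
  simpa [bcoef] using h

lemma sum_Icc_bcoef_sub (β : ℝ) (n : ℕ) :
    ∑ j ∈ Icc 1 (n - 1), (bcoef β (j - 1) - bcoef β j) = bcoef β 0 - bcoef β (n - 1) := by
  have hIcc : Icc 1 (n - 1) = Ico 1 (n - 1 + 1) := by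
    ext j; simp only [mem_Icc, mem_Ico]; omega
  rw [hIcc, sum_Ico_eq_sum_range, ← sum_range_sub' (bcoef β)]
  exact sum_congr (by simp) fun i _ => by simp [add_comm 1 i]

lemma L1_eq_sum_sub {α : ℝ} (hα : α ≠ 1) (Δt : ℝ) (f : ℕ → ℝ) (n : ℕ) :
    L1 α Δt f n = Δt ^ (-α) / Real.Gamma (2 - α) *
      (bcoef (1 - α) (n - 1) * (f n - f 0) +
        ∑ j ∈ Icc 1 (n - 1), (bcoef (1 - α) (j - 1) - bcoef (1 - α) j) * (f n - f (n - j))) := by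
  have hsum := sum_Icc_bcoef_sub (1 - α) n
  rw [bcoef_zero (sub_ne_zero.mpr hα.symm)] at hsum
  simp only [L1, mul_sub, sum_sub_distrib, ← sum_mul, hsum]
  ring

lemma L1_le_mul_L1 {α : ℝ} (hα0 : 0 ≤ α) (hα1 : α < 1) {Δt : ℝ} (hΔt : 0 ≤ Δt)
    {f g : ℕ → ℝ} {n : ℕ} {s : ℝ} (h : ∀ m ≤ n, g n - g m ≤ s * (f n - f m)) :
    L1 α Δt g n ≤ s * L1 α Δt f n := by
  have hβ0 : 0 ≤ 1 - α := by linarith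
  have hβ1 : 1 - α ≤ 1 := by linarith
  have hscale : 0 ≤ Δt ^ (-α) / Real.Gamma (2 - α) :=
    div_nonneg (Real.rpow_nonneg hΔt _) (Real.Gamma_pos_of_pos (by linarith)).le
  have hweight : ∀ j ∈ Icc 1 (n - 1), 0 ≤ bcoef (1 - α) (j - 1) - bcoef (1 - α) j := by
    intro j hj
    obtain ⟨k, rfl⟩ : ∃ k, j = k + 1 := ⟨j - 1, by grind⟩
    simpa using bcoef_succ_le hβ0 hβ1 k
  rw [L1_eq_sum_sub hα1.ne, L1_eq_sum_sub hα1.ne, mul_left_comm]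
  refine mul_le_mul_of_nonneg_left ?_ hscale
  have hterm : ∀ {w : ℝ} {m : ℕ}, 0 ≤ w → m ≤ n → w * (g n - g m) ≤ s * (w * (f n - f m)) :=
    fun hw hm => (mul_le_mul_of_nonneg_left (h _ hm) hw).trans_eq (mul_left_comm _ _ _)
  rw [mul_add, mul_sum]
  exact add_le_add (hterm (bcoef_nonneg hβ0 _) (Nat.zero_le n))
    (sum_le_sum fun j hj => hterm (hweight j hj) (Nat.sub_le n j))

lemma sub_one_sub_log_sub_le {a b : ℝ} (ha : 0 < a) (hb : 0 < b) :
    (a - 1 - Real.log a) - (b - 1 - Real.log b) ≤ (1 - 1 / a) * (a - b) := by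
  have h := Real.log_le_sub_one_of_pos (div_pos hb ha)
  rw [Real.log_div hb.ne' ha.ne'] at h
  have hrhs : (1 - 1 / a) * (a - b) = (a - b) - (1 - b / a) := by field_simp
  linarith

theorem stmt_3_general (α Δt : ℝ) (hα0 : 0 < α) (hα1 : α < 1) (hΔt : 0 < Δt)
    (x : ℕ → ℝ) (hx : ∀ j, 0 < x j) (n : ℕ) :
    L1 α Δt (fun j => x j - 1 - Real.log (x j)) n ≤ (1 - 1 / x n) * L1 α Δt x n :=
  L1_le_mul_L1 hα0.le hα1 hΔt.le fun m _ => sub_one_sub_log_sub_le (hx n) (hx m)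

/-- Lemma 2.2: `δ_n^α (x - 1 - ln x) ≤ (1 - 1/x n) · δ_n^α x`. -/
theorem stmt_3 (α Δt : ℝ) (hα0 : 0 < α) (hα1 : α < 1) (hΔt : 0 < Δt)
    (x : ℕ → ℝ) (hx : ∀ j, 0 < x j) (n : ℕ) (hn : 1 ≤ n) :
    L1 α Δt (fun j => x j - 1 - Real.log (x j)) n ≤ (1 - 1 / x n) * L1 α Δt x n :=
  stmt_3_general α Δt hα0 hα1 hΔt x hx n
end

section
/- (Lemma 3.4) Fix α ∈ (0,1), Δt > 0, an integer k ≥ 0, positive reals w₁, …, w_{k+1}, and a sequence h : ℕ → ℝ. Define u : ℕ → ℝ by u(m) = Σ_{i=1}^{m} w_{m+1−i}·h(i) for 1 ≤ m ≤ k+1 and u(0) = (Σ_{i=1}^{k+1} w_i·b_{k+1−i}^{(1−α)})·h(0) / b_k^{(1−α)}. Then δ_{k+1}^α u = Σ_{i=1}^{k+1} w_{k+2−i}·δ_i^α h. -/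
open Filter Finset

lemma refl_sum (n : ℕ) (f : ℕ → ℝ) :
    ∑ i ∈ Finset.Icc 1 n, f i = ∑ i ∈ Finset.Icc 1 n, f (n + 1 - i) := by
  apply Finset.sum_nbij' (fun i => n + 1 - i) (fun i => n + 1 - i)
  · intro a ha; simp only [Finset.mem_Icc] at *; omega
  · intro a ha; simp only [Finset.mem_Icc] at *; omega
  · intro a ha; simp only [Finset.mem_Icc] at ha; omega
  · intro a ha; simp only [Finset.mem_Icc] at ha; omega
  · intro a ha; simp only [Finset.mem_Icc] at ha; congr 1; omega

lemma swap_sum (k : ℕ) (F : ℕ → ℕ → ℝ) :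
    ∑ j ∈ Finset.Icc 1 k, ∑ m ∈ Finset.Icc 1 (k + 1 - j), F j m
      = ∑ i ∈ Finset.Icc 1 (k + 1), ∑ j ∈ Finset.Icc 1 (i - 1), F j (i - j) := by
  rw [Finset.sum_sigma', Finset.sum_sigma']
  apply Finset.sum_nbij' (fun p => (⟨p.1 + p.2, p.1⟩ : Σ _ : ℕ, ℕ))
    (fun p => (⟨p.2, p.1 - p.2⟩ : Σ _ : ℕ, ℕ))
  · intro p hp; obtain ⟨a, b⟩ := p
    dsimp only at hp ⊢; simp only [Finset.mem_sigma, Finset.mem_Icc] at hp ⊢; omega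
  · intro p hp; obtain ⟨a, b⟩ := p
    dsimp only at hp ⊢; simp only [Finset.mem_sigma, Finset.mem_Icc] at hp ⊢; omega
  · intro p hp
    obtain ⟨a, b⟩ := p
    simp only [Finset.mem_sigma, Finset.mem_Icc] at hp
    dsimp only at hp ⊢
    have : a + b - a = b := by omega
    rw [this]
  · intro p hp
    obtain ⟨a, b⟩ := p
    simp only [Finset.mem_sigma, Finset.mem_Icc] at hp
    dsimp only at hp ⊢
    have : b + (a - b) = a := by omega
    rw [this]
  · intro p hp
    obtain ⟨a, b⟩ := p
    simp only [Finset.mem_sigma, Finset.mem_Icc] at hp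
    dsimp only at hp ⊢
    congr 1
    omega

/-- Lemma 3.4: the L1 operator commutes with the weighted convolution. -/
theorem stmt_7 (α Δt : ℝ) (hα0 : 0 < α) (hα1 : α < 1) (hΔt : 0 < Δt)
    (k : ℕ) (w : ℕ → ℝ) (hw : ∀ i : ℕ, 1 ≤ i → i ≤ k + 1 → 0 < w i)
    (h u : ℕ → ℝ)
    (hu : ∀ m : ℕ, 1 ≤ m → m ≤ k + 1 →
      u m = ∑ i ∈ Finset.Icc 1 m, w (m + 1 - i) * h i)
    (hu0 : u 0 =
      (∑ i ∈ Finset.Icc 1 (k + 1), w i * bcoef (1 - α) (k + 1 - i)) * h 0 /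
        bcoef (1 - α) k) :
    L1 α Δt u (k + 1) = ∑ i ∈ Finset.Icc 1 (k + 1), w (k + 2 - i) * L1 α Δt h i := by
  set β := 1 - α with hβdef
  have hbpos : ∀ j : ℕ, 0 < bcoef β j := by
    intro j
    have h1 : (j : ℝ) ^ β < ((j : ℝ) + 1) ^ β := by
      apply Real.rpow_lt_rpow (Nat.cast_nonneg j) (by linarith) (by rw [hβdef]; linarith)
    simpa [bcoef] using sub_pos.mpr h1
  set c := Δt ^ (-α) / Real.Gamma (2 - α) with hc
  -- pieces
  have hA : u (k + 1) = ∑ i ∈ Finset.Icc 1 (k + 1), w (k + 2 - i) * h i := by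
    rw [hu (k + 1) (by omega) le_rfl]
  have hB : bcoef β k * u 0
      = ∑ i ∈ Finset.Icc 1 (k + 1), w (k + 2 - i) * (bcoef β (i - 1) * h 0) := by
    rw [hu0, mul_comm, div_mul_cancel₀ _ (ne_of_gt (hbpos k)), Finset.sum_mul,
      refl_sum (k + 1) (fun i => w i * bcoef β (k + 1 - i) * h 0)]
    refine Finset.sum_congr rfl fun i hi => ?_
    simp only [Finset.mem_Icc] at hi
    have h1 : k + 1 + 1 - i = k + 2 - i := by omega
    have h2 : k + 1 - (k + 1 + 1 - i) = i - 1 := by omega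
    rw [h1, h2]
    ring
  have hC : (∑ j ∈ Finset.Icc 1 k, (bcoef β (j - 1) - bcoef β j) * u (k + 1 - j))
      = ∑ i ∈ Finset.Icc 1 (k + 1), w (k + 2 - i) *
          ∑ j ∈ Finset.Icc 1 (i - 1), (bcoef β (j - 1) - bcoef β j) * h (i - j) := by
    have step1 : ∀ j ∈ Finset.Icc 1 k,
        (bcoef β (j - 1) - bcoef β j) * u (k + 1 - j)
          = ∑ m ∈ Finset.Icc 1 (k + 1 - j),
              (bcoef β (j - 1) - bcoef β j) * (w (k + 2 - j - m) * h m) := by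
      intro j hj
      simp only [Finset.mem_Icc] at hj
      rw [hu (k + 1 - j) (by omega) (by omega), Finset.mul_sum]
      refine Finset.sum_congr rfl fun m hm => ?_
      simp only [Finset.mem_Icc] at hm
      congr 3
      omega
    rw [Finset.sum_congr rfl step1,
      swap_sum k (fun j m => (bcoef β (j - 1) - bcoef β j) * (w (k + 2 - j - m) * h m))]
    refine Finset.sum_congr rfl fun i hi => ?_
    simp only [Finset.mem_Icc] at hi
    rw [Finset.mul_sum]
    refine Finset.sum_congr rfl fun j hj => ?_
    simp only [Finset.mem_Icc] at hj
    have h1 : k + 2 - j - (i - j) = k + 2 - i := by omega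
    rw [h1]
    ring
  have key : u (k + 1) - bcoef β k * u 0 -
      (∑ j ∈ Finset.Icc 1 k, (bcoef β (j - 1) - bcoef β j) * u (k + 1 - j))
      = ∑ i ∈ Finset.Icc 1 (k + 1), w (k + 2 - i) *
          (h i - bcoef β (i - 1) * h 0 -
            ∑ j ∈ Finset.Icc 1 (i - 1), (bcoef β (j - 1) - bcoef β j) * h (i - j)) := by
    rw [hA, hB, hC, ← Finset.sum_sub_distrib, ← Finset.sum_sub_distrib]
    refine Finset.sum_congr rfl fun i hi => ?_
    ring
  have hk1 : k + 1 - 1 = k := by omega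
  simp only [L1, hk1, ← hc, ← hβdef]
  rw [key, Finset.mul_sum]
  refine Finset.sum_congr rfl fun i hi => ?_
  ring
end

section
/- (Theorem 3.2, endemic equilibrium) Let λ, β, γ, μ, r, δ > 0 and let f : ℝ → ℝ satisfy assumptions (A1)–(A3). If the reproduction number R₀ = β·λ·f'(0)/(γ·(μ+r)) > 1, then there exists a unique I* ∈ (0, λ/(μ+r)) such that β·((λ − (μ+r)·I*)/γ)·f(I*) = (μ+r)·I*. Consequently, setting S* = (λ − (μ+r)·I*)/γ and R* = r·I*/δ, the triple (S*, I*, R*) is the unique positive solution of the equilibrium equations λ − β S* f(I*) − γ S* = 0, β S* f(I*) − (μ+r) I* = 0, r I* − δ R* = 0. -/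
/-!
Near `0` the ratio `β S(I) f(I) / I`, with `S(I) = (λ - (μ + r) I) / γ`, tends to
`β λ f'(0) / γ = R₀ (μ + r) > μ + r`, while at `I = λ / (μ + r)` it vanishes; by the intermediate
value theorem it takes the value `μ + r` in between. It is strictly decreasing there, as the
product of the positive strictly decreasing `β S(I)` and the positive nonincreasing `f(I) / I`,
so that value is taken once. Every positive equilibrium has `γ S = λ - (μ + r) I > 0`, hence
its `I` is that point.
-/

open Filter Finset Topology Set

theorem StrictAntiOn.mul_antitoneOn_of_nonneg {α R : Type*} [Preorder α] [Semiring R]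
    [PartialOrder R] [PosMulMono R] [MulPosStrictMono R] {s : Set α} {g h : α → R}
    (hg : StrictAntiOn g s) (hh : AntitoneOn h s) (hg0 : ∀ x ∈ s, 0 ≤ g x)
    (hh0 : ∀ x ∈ s, 0 < h x) : StrictAntiOn (fun x => g x * h x) s :=
  fun _ hx _ hy hxy =>
    mul_lt_mul_of_lt_of_le_of_nonneg_of_pos (hg hx hy hxy) (hh hx hy hxy.le) (hg0 _ hy) (hh0 _ hx)

theorem tendsto_div_self_nhdsGT_zero {f : ℝ → ℝ} {d : ℝ} (hf0 : f 0 = 0)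
    (hf : HasDerivWithinAt f d (Ioi 0) 0) : Tendsto (fun x => f x / x) (𝓝[>] 0) (𝓝 d) := by
  rw [hasDerivWithinAt_iff_tendsto_slope' Set.self_notMem_Ioi] at hf
  exact hf.congr fun x => by rw [slope_def_field, hf0, sub_zero, sub_zero]

theorem exists_mem_Ioo_eq_of_tendsto_nhdsGT {α δ : Type*} [ConditionallyCompleteLinearOrder α]
    [TopologicalSpace α] [OrderTopology α] [DenselyOrdered α] [LinearOrder δ]
    [TopologicalSpace δ] [OrderClosedTopology δ] {F : α → δ} {a b : α} {L c : δ} (hab : a < b)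
    (hF : ContinuousOn F (Ioc a b)) (hlim : Tendsto F (𝓝[>] a) (𝓝 L)) (hcL : c < L)
    (hbc : F b < c) : ∃ x ∈ Ioo a b, F x = c := by
  have := nhdsGT_neBot_of_exists_gt ⟨b, hab⟩
  obtain ⟨x₀, hx₀c, hx₀⟩ :=
    ((hlim.eventually (eventually_gt_nhds hcL)).and (Ioo_mem_nhdsGT hab)).exists
  obtain ⟨x, hx, hFx⟩ := intermediate_value_Ioo' hx₀.2.le
    (hF.mono (Icc_subset_Ioc_iff hx₀.2.le |>.mpr ⟨hx₀.1, le_rfl⟩)) ⟨hbc, hx₀c⟩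
  exact ⟨x, ⟨hx₀.1.trans hx.1, hx.2⟩, hFx⟩

section Endemic

variable {lam β γ c : ℝ} {f : ℝ → ℝ}

theorem endemic_eq_iff_ratio_eq {I : ℝ} (hI : I ≠ 0) :
    β * ((lam - c * I) / γ) * f I = c * I ↔ β * ((lam - c * I) / γ) * (f I / I) = c := by
  rw [mul_div_assoc' (β * ((lam - c * I) / γ)) (f I) I, div_eq_iff hI]

theorem strictAntiOn_endemicRatio (hβ : 0 < β) (hγ : 0 < γ) (hc : 0 < c)
    (hfpos : ∀ y, 0 < y → 0 < f y) (hmono : AntitoneOn (fun y => f y / y) (Ioi 0)) :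
    StrictAntiOn (fun I => β * ((lam - c * I) / γ) * (f I / I)) (Ioo 0 (lam / c)) := by
  refine StrictAntiOn.mul_antitoneOn_of_nonneg (fun x _ y _ hxy => by gcongr)
    (hmono.mono Ioo_subset_Ioi_self) (fun x hx => ?_) fun x hx => div_pos (hfpos x hx.1) hx.1
  have : c * x < lam := by linarith [(lt_div_iff₀ hc).mp hx.2]
  exact mul_nonneg hβ.le (div_nonneg (by linarith) hγ.le)

theorem exists_endemicRatio_eq {d : ℝ} (hlam : 0 < lam) (hc : 0 < c) (hf0 : f 0 = 0)
    (hf : ContinuousOn f (Ioi 0)) (hd : HasDerivWithinAt f d (Ioi 0) 0)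
    (hR : c < β * lam * d / γ) :
    ∃ I ∈ Ioo 0 (lam / c), β * ((lam - c * I) / γ) * (f I / I) = c := by
  have hS : Continuous fun I => β * ((lam - c * I) / γ) := by fun_prop
  have hlim := (hS.continuousWithinAt (s := Ioi 0) (x := 0)).tendsto.mul
    (tendsto_div_self_nhdsGT_zero hf0 hd)
  have hcont : ContinuousOn (fun I => β * ((lam - c * I) / γ) * (f I / I)) (Ioc 0 (lam / c)) :=
    hS.continuousOn.mul <| (hf.mono Ioc_subset_Ioi_self).div continuousOn_id fun x hx => hx.1.ne'
  refine exists_mem_Ioo_eq_of_tendsto_nhdsGT (div_pos hlam hc) hcont hlim ?_ ?_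
  · rwa [mul_zero, sub_zero, mul_div_assoc', div_mul_eq_mul_div]
  · rw [mul_div_cancel₀ _ hc.ne']
    simpa using hc

theorem endemic_of_equilibrium {S I : ℝ} (hγ : 0 < γ) (hc : 0 < c) (hS : 0 < S)
    (hS_eq : lam - β * S * f I - γ * S = 0) (hI_eq : β * S * f I - c * I = 0) :
    S = (lam - c * I) / γ ∧ I < lam / c ∧ β * ((lam - c * I) / γ) * f I = c * I := by
  have hS' : S = (lam - c * I) / γ := by rw [eq_div_iff hγ.ne']; linarith
  refine ⟨hS', ?_, by rw [← hS']; linarith⟩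
  rw [lt_div_iff₀ hc]
  nlinarith

end Endemic

theorem stmt_13_general (lam β γ μ r δ : ℝ)
    (hlam : 0 < lam) (hβ : 0 < β) (hγ : 0 < γ) (hμ : 0 < μ) (hr : 0 < r) (hδ : 0 < δ)
    (f f' : ℝ → ℝ)
    (hderiv : ∀ x ∈ Set.Ici (0 : ℝ), HasDerivWithinAt f (f' x) (Set.Ici 0) x)
    (hA1 : f 0 = 0 ∧ ∀ y : ℝ, 0 < y → 0 < f y)
    (hA2 : (∀ y : ℝ, 0 ≤ y → 0 < f' y) ∧ AntitoneOn (fun y => f y / y) (Set.Ioi 0))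
    (hR0 : 1 < β * lam * f' 0 / (γ * (μ + r))) :
    ∃ Istar : ℝ, Istar ∈ Set.Ioo 0 (lam / (μ + r)) ∧
      β * ((lam - (μ + r) * Istar) / γ) * f Istar = (μ + r) * Istar ∧
      (∀ J ∈ Set.Ioo 0 (lam / (μ + r)),
        β * ((lam - (μ + r) * J) / γ) * f J = (μ + r) * J → J = Istar) ∧
      (lam - β * ((lam - (μ + r) * Istar) / γ) * f Istar -
          γ * ((lam - (μ + r) * Istar) / γ) = 0 ∧
        β * ((lam - (μ + r) * Istar) / γ) * f Istar - (μ + r) * Istar = 0 ∧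
        r * Istar - δ * (r * Istar / δ) = 0) ∧
      ∀ S' I' R' : ℝ, 0 < S' → 0 < I' → 0 < R' →
        lam - β * S' * f I' - γ * S' = 0 → β * S' * f I' - (μ + r) * I' = 0 →
        r * I' - δ * R' = 0 →
        S' = (lam - (μ + r) * Istar) / γ ∧ I' = Istar ∧ R' = r * Istar / δ := by
  obtain ⟨hf0, hfpos⟩ := hA1
  have hc : 0 < μ + r := add_pos hμ hr
  have hR : μ + r < β * lam * f' 0 / γ :=
    (lt_div_iff₀ hγ).mpr (by linarith [(one_lt_div (by positivity)).mp hR0])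
  obtain ⟨I, hI, hFI⟩ := exists_endemicRatio_eq hlam hc hf0
    (fun x hx => (hderiv x (Ioi_subset_Ici_self hx)).continuousWithinAt.mono Ioi_subset_Ici_self)
    ((hderiv 0 Set.self_mem_Ici).mono Ioi_subset_Ici_self) hR
  have hIeq := (endemic_eq_iff_ratio_eq hI.1.ne').mpr hFI
  have huniq : ∀ J ∈ Ioo 0 (lam / (μ + r)),
      β * ((lam - (μ + r) * J) / γ) * f J = (μ + r) * J → J = I := fun J hJ hJeq =>
    (strictAntiOn_endemicRatio hβ hγ hc hfpos hA2.2).injOn hJ hI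
      (((endemic_eq_iff_ratio_eq hJ.1.ne').mp hJeq).trans hFI.symm)
  refine ⟨I, hI, hIeq, huniq, ⟨by rw [hIeq]; field_simp; ring, by rw [hIeq, sub_self],
    by field_simp; ring⟩, ?_⟩
  intro S' I' R' hS'pos hI'pos _ hS'eq hI'eq hR'eq
  obtain ⟨hS', hI'lt, hI'root⟩ := endemic_of_equilibrium hγ hc hS'pos hS'eq hI'eq
  obtain rfl := huniq I' ⟨hI'pos, hI'lt⟩ hI'root
  exact ⟨hS', rfl, by rw [eq_div_iff hδ.ne']; linarith⟩

/-- Theorem 3.2, existence and uniqueness of the endemic equilibrium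
when `R₀ > 1`. `f'` denotes the derivative of the incidence function on `[0,∞)`. -/
theorem stmt_13 (lam β γ μ r δ : ℝ)
    (hlam : 0 < lam) (hβ : 0 < β) (hγ : 0 < γ) (hμ : 0 < μ) (hr : 0 < r) (hδ : 0 < δ)
    (f f' : ℝ → ℝ)
    (hderiv : ∀ x ∈ Set.Ici (0 : ℝ), HasDerivWithinAt f (f' x) (Set.Ici 0) x)
    (hf'cont : ContinuousOn f' (Set.Ici 0))
    (hA1 : f 0 = 0 ∧ ∀ y : ℝ, 0 < y → 0 < f y)
    (hA2 : (∀ y : ℝ, 0 ≤ y → 0 < f' y) ∧ AntitoneOn (fun y => f y / y) (Set.Ioi 0))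
    (hA3 : ∀ y : ℝ, 0 ≤ y → f y ≤ y * f' 0)
    (hR0 : 1 < β * lam * f' 0 / (γ * (μ + r))) :
    ∃ Istar : ℝ, Istar ∈ Set.Ioo 0 (lam / (μ + r)) ∧
      β * ((lam - (μ + r) * Istar) / γ) * f Istar = (μ + r) * Istar ∧
      (∀ J ∈ Set.Ioo 0 (lam / (μ + r)),
        β * ((lam - (μ + r) * J) / γ) * f J = (μ + r) * J → J = Istar) ∧
      (lam - β * ((lam - (μ + r) * Istar) / γ) * f Istar -
          γ * ((lam - (μ + r) * Istar) / γ) = 0 ∧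
        β * ((lam - (μ + r) * Istar) / γ) * f Istar - (μ + r) * Istar = 0 ∧
        r * Istar - δ * (r * Istar / δ) = 0) ∧
      ∀ S' I' R' : ℝ, 0 < S' → 0 < I' → 0 < R' →
        lam - β * S' * f I' - γ * S' = 0 → β * S' * f I' - (μ + r) * I' = 0 →
        r * I' - δ * R' = 0 →
        S' = (lam - (μ + r) * Istar) / γ ∧ I' = Istar ∧ R' = r * Istar / δ :=
  stmt_13_general lam β γ μ r δ hlam hβ hγ hμ hr hδ f f' hderiv hA1 hA2 hR0
end

section
/- (Eq. (12), negativity of g' at a positive root) Let λ, β, γ, μ, r > 0 and let f : ℝ → ℝ be differentiable on (0,∞) with f(I) > 0 and I·f'(I) ≤ f(I) for I > 0. Define g(I) = β·((λ − (μ+r)·I)/γ)·f(I) − (μ+r)·I. If I* ∈ (0, λ/(μ+r)) satisfies g(I*) = 0, then g'(I*) < 0. -/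
open Filter Finset

/-- Eq. (12): negativity of `g'` at a positive root. -/
theorem stmt_14 (lam β γ μ r : ℝ)
    (hlam : 0 < lam) (hβ : 0 < β) (hγ : 0 < γ) (hμ : 0 < μ) (hr : 0 < r)
    (f f' : ℝ → ℝ)
    (hderiv : ∀ x : ℝ, 0 < x → HasDerivAt f (f' x) x)
    (hfpos : ∀ x : ℝ, 0 < x → 0 < f x)
    (hII : ∀ x : ℝ, 0 < x → x * f' x ≤ f x)
    (Istar : ℝ) (hIstar : Istar ∈ Set.Ioo 0 (lam / (μ + r)))
    (hroot : β * ((lam - (μ + r) * Istar) / γ) * f Istar - (μ + r) * Istar = 0) :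
    deriv (fun I : ℝ => β * ((lam - (μ + r) * I) / γ) * f I - (μ + r) * I) Istar < 0 := by
  obtain ⟨hI0, hIu⟩ := hIstar
  set c : ℝ := μ + r with hc
  have hcpos : 0 < c := by positivity
  have hf := hderiv Istar hI0
  have hfp := hfpos Istar hI0
  -- derivative of the linear factor
  have h1 : HasDerivAt (fun I : ℝ => β * ((lam - c * I) / γ)) (β * (-c) / γ) Istar := by
    have : HasDerivAt (fun I : ℝ => β * ((lam - c * I) / γ))
        (β * ((0 - c * 1) / γ)) Istar := by
      exact (((hasDerivAt_const Istar lam).sub ((hasDerivAt_id Istar).const_mul c)).div_const γ).const_mul β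
    convert this using 1; ring
  have hg : HasDerivAt (fun I : ℝ => β * ((lam - c * I) / γ) * f I - c * I)
      ((β * (-c) / γ) * f Istar + β * ((lam - c * Istar) / γ) * f' Istar - c * 1) Istar :=
    (h1.mul hf).sub ((hasDerivAt_id Istar).const_mul c)
  rw [hg.deriv]
  -- key estimate
  have hroot' : β * ((lam - c * Istar) / γ) * f Istar = c * Istar := by linarith
  have hA : β * ((lam - c * Istar) / γ) = c * Istar / f Istar := by
    field_simp at hroot' ⊢
    linarith [hroot']
  have hII' := hII Istar hI0
  have hbound : β * ((lam - c * Istar) / γ) * f' Istar ≤ c := by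
    rw [hA]
    rw [div_mul_eq_mul_div, div_le_iff₀ hfp]
    calc c * Istar * f' Istar = c * (Istar * f' Istar) := by ring
      _ ≤ c * f Istar := by
        exact mul_le_mul_of_nonneg_left hII' hcpos.le
  have hneg : (β * (-c) / γ) * f Istar < 0 := by
    have h2 : 0 < (β * c / γ) * f Istar := by positivity
    have h3 : (β * (-c) / γ) * f Istar = -((β * c / γ) * f Istar) := by ring
    linarith
  nlinarith
end

section
/- (Eq. (16), discrete Neumann Laplacian estimate) Let M ≥ 0 be an integer, c > 0, and x : {−1, 0, …, M+1} → ℝ with x(n) > 0 for all n, x(−1) = x(0) and x(M+1) = x(M). Then Σ_{n=0}^{M} (1 − c/x(n))·( x(n+1) − 2x(n) + x(n−1) ) ≤ 0. -/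
open Filter Finset

lemma icc_step' (a b : ℤ) (h : a ≤ b + 1) :
    Finset.Icc a (b+1) = insert (b+1) (Finset.Icc a b) := by
  ext n; simp [Finset.mem_Icc]; omega

lemma sum_step' (a b : ℤ) (h : a ≤ b + 1) (f : ℤ → ℝ) :
    ∑ n ∈ Finset.Icc a (b+1), f n = (∑ n ∈ Finset.Icc a b, f n) + f (b+1) := by
  rw [icc_step' a b h, Finset.sum_insert (by simp)]
  ring

/-- Summation by parts for the discrete second difference. -/
lemma sbp (g x : ℤ → ℝ) : ∀ N : ℕ,
    ∑ n ∈ Finset.Icc (0:ℤ) (N:ℤ), g n * (x (n+1) - 2 * x n + x (n-1))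
    = g N * (x ((N:ℤ)+1) - x N) - g 0 * (x 0 - x (-1))
      - ∑ n ∈ Finset.Icc (0:ℤ) ((N:ℤ)-1), (g (n+1) - g n) * (x (n+1) - x n) := by
  intro N
  induction N with
  | zero =>
      simp [Finset.Icc_self]
      ring
  | succ N ih =>
      push_cast
      rw [sum_step' 0 (N:ℤ) (by positivity), ih]
      rw [show ((N:ℤ) + 1 - 1) = (N:ℤ) by ring,
        show ((N:ℤ)) = ((N:ℤ)-1)+1 by ring,
        sum_step' 0 ((N:ℤ)-1) (by omega)]
      rw [show ((N:ℤ)-1)+1 = (N:ℤ) by ring]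
      ring

/-- Eq. (16), discrete Neumann Laplacian estimate. -/
theorem stmt_16 (M : ℕ) (c : ℝ) (hc : 0 < c)
    (x : ℤ → ℝ) (hx : ∀ n : ℤ, -1 ≤ n → n ≤ (M : ℤ) + 1 → 0 < x n)
    (hb1 : x (-1) = x 0) (hb2 : x ((M : ℤ) + 1) = x (M : ℤ)) :
    ∑ n ∈ Finset.Icc (0 : ℤ) (M : ℤ),
        (1 - c / x n) * (x (n + 1) - 2 * x n + x (n - 1)) ≤ 0 := by
  rw [sbp (fun n => 1 - c / x n) x M]
  simp only [hb1, hb2, sub_self, mul_zero, zero_sub]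
  rw [neg_nonpos]
  apply Finset.sum_nonneg
  intro n hn
  rw [Finset.mem_Icc] at hn
  have ha : 0 < x n := hx n (by omega) (by omega)
  have hb : 0 < x (n+1) := hx (n+1) (by omega) (by omega)
  have key : (1 - c / x (n+1)) - (1 - c / x n) = c * (x (n+1) - x n) / (x n * x (n+1)) := by
    field_simp
    ring
  rw [key, div_mul_eq_mul_div, mul_assoc]
  have : (x (n+1) - x n) * (x (n+1) - x n) = (x (n+1) - x n)^2 := by ring
  rw [this]
  positivity
end

section
/- (Theorem 3.3, global stability of the disease-free equilibrium) Assume f : ℝ → ℝ satisfies assumptions (A1)–(A3), and let (S, I, R) be a solution of the discrete system (6) with positive initial data. If the reproduction number R₀ = β·λ·f'(0)/(γ·(μ+r)) ≤ 1, then for every n with 0 ≤ n ≤ M: S_n^k → λ/γ, I_n^k → 0 and R_n^k → 0 as k → ∞; i.e., the disease-free equilibrium E₀ = (λ/γ, 0, 0) of system (6) is globally asymptotically stable. -/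
open Filter Finset

section Bcoef

variable {p : ℝ} (hp0 : 0 < p) (hp1 : p < 1)

lemma bcoef_pos (hp0 : 0 < p) (j : ℕ) : 0 < bcoef p j := by
  have : ((j : ℝ)) ^ p < ((j : ℝ) + 1) ^ p :=
    Real.rpow_lt_rpow (Nat.cast_nonneg j) (by linarith) hp0
  simpa [bcoef] using sub_pos.2 this

lemma bcoef_zero_s18 (hp0 : 0 < p) : bcoef p 0 = 1 := by
  simp [bcoef, Real.zero_rpow (ne_of_gt hp0)]

lemma bcoef_succ_lt (hp0 : 0 < p) (hp1 : p < 1) (j : ℕ) :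
    bcoef p (j + 1) < bcoef p j := by
  have hc := (Real.strictConcaveOn_rpow hp0 hp1).2
    (Set.mem_Ici.2 (Nat.cast_nonneg j))
    (Set.mem_Ici.2 (show (0:ℝ) ≤ (j:ℝ) + 2 by positivity))
    (show (j:ℝ) ≠ (j:ℝ) + 2 by linarith)
    (show (0:ℝ) < 1/2 by norm_num) (show (0:ℝ) < 1/2 by norm_num) (by norm_num)
  simp only [smul_eq_mul] at hc
  have hmid : (1:ℝ)/2 * (j : ℝ) + 1/2 * ((j:ℝ) + 2) = (j : ℝ) + 1 := by ring
  rw [hmid] at hc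
  have he : ((j:ℝ)+1+1) = (j:ℝ)+2 := by ring
  simp only [bcoef, Nat.cast_add, Nat.cast_one]
  rw [he]
  nlinarith [hc]

lemma bcoef_anti_s18 (hp0 : 0 < p) (hp1 : p < 1) {i j : ℕ} (h : i ≤ j) :
    bcoef p j ≤ bcoef p i := by
  induction j, h using Nat.le_induction with
  | base => exact le_refl _
  | succ n hn ih => exact le_trans (bcoef_succ_lt hp0 hp1 n).le ih

lemma bcoef_le_one (hp0 : 0 < p) (hp1 : p < 1) (j : ℕ) : bcoef p j ≤ 1 := by
  simpa [bcoef_zero_s18 hp0] using bcoef_anti_s18 hp0 hp1 (Nat.zero_le j)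

lemma bcoef_sum_range (hp0 : 0 < p) (n : ℕ) :
    ∑ i ∈ Finset.range n, bcoef p i = (n : ℝ) ^ p := by
  have := Finset.sum_range_sub (fun i : ℕ => ((i : ℝ)) ^ p) n
  have h2 : ∀ i : ℕ, bcoef p i = ((i+1 : ℕ) : ℝ) ^ p - ((i:ℕ) : ℝ) ^ p := by
    intro i; simp [bcoef]
  rw [Finset.sum_congr rfl fun i _ => h2 i, this]
  norm_num [Real.zero_rpow (ne_of_gt hp0)]

lemma bcoef_le (hp0 : 0 < p) (hp1 : p < 1) (j : ℕ) :
    bcoef p j ≤ ((j : ℝ) + 1) ^ (p - 1) := by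
  have hcard : ((j:ℝ) + 1) * bcoef p j ≤ ∑ i ∈ Finset.range (j+1), bcoef p i := by
    have := Finset.card_nsmul_le_sum (Finset.range (j+1)) (bcoef p) (bcoef p j)
      (fun i hi => bcoef_anti_s18 hp0 hp1 (Nat.lt_succ_iff.1 (Finset.mem_range.1 hi)))
    simpa [nsmul_eq_mul, Nat.cast_add] using this
  rw [bcoef_sum_range hp0] at hcard
  have hj1 : (0:ℝ) < (j:ℝ) + 1 := by positivity
  have : ((j:ℝ)+1) ^ (p-1) = ((j:ℝ)+1) ^ p / ((j:ℝ)+1) := by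
    rw [Real.rpow_sub hj1, Real.rpow_one]
  rw [this, le_div_iff₀ hj1]
  calc bcoef p j * ((j:ℝ)+1) = ((j:ℝ)+1) * bcoef p j := by ring
    _ ≤ ((j+1:ℕ):ℝ) ^ p := by push_cast at hcard ⊢; linarith
    _ = ((j:ℝ)+1) ^ p := by push_cast; ring_nf

lemma bcoef_tendsto (hp0 : 0 < p) (hp1 : p < 1) :
    Tendsto (bcoef p) atTop (nhds 0) := by
  have h1 : Tendsto (fun j : ℕ => ((j:ℝ) + 1) ^ (p - 1)) atTop (nhds 0) := by
    have hb : Tendsto (fun j : ℕ => (j : ℝ) + 1) atTop atTop :=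
      tendsto_atTop_add_const_right _ 1 tendsto_natCast_atTop_atTop
    have := (tendsto_rpow_neg_atTop (y := 1 - p) (by linarith)).comp hb
    simpa [Function.comp_def, neg_sub] using this
  exact squeeze_zero (fun j => (bcoef_pos hp0 j).le) (bcoef_le hp0 hp1) h1

lemma bcoef_sum_Ioc (hp0 : 0 < p) {a c : ℕ} (h : a ≤ c) :
    ∑ j ∈ Finset.Ioc a c, (bcoef p (j - 1) - bcoef p j) = bcoef p a - bcoef p c := by
  induction c, h using Nat.le_induction with
  | base => simp
  | succ n hn ih =>
      rw [← Finset.sum_Ioc_consecutive _ hn (Nat.le_succ n), ih]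
      simp [Nat.Ioc_succ_singleton]

lemma bcoef_sum_Icc (hp0 : 0 < p) (m : ℕ) :
    ∑ j ∈ Finset.Icc 1 m, (bcoef p (j - 1) - bcoef p j) = bcoef p 0 - bcoef p m := by
  have : Finset.Icc 1 m = Finset.Ioc 0 m := by
    ext x; simp [Finset.mem_Icc, Finset.mem_Ioc]; omega
  rw [this]
  exact bcoef_sum_Ioc hp0 (Nat.zero_le m)

end Bcoef
noncomputable def memE (p : ℝ) (x : ℕ → ℝ) (k : ℕ) : ℝ :=
  bcoef p k * x 0 + ∑ j ∈ Finset.Icc 1 k, (bcoef p (j - 1) - bcoef p j) * x (k + 1 - j)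

section MemE

variable {p : ℝ}

lemma bdiff_nonneg (hp0 : 0 < p) (hp1 : p < 1) {j : ℕ} (hj : 1 ≤ j) :
    0 ≤ bcoef p (j - 1) - bcoef p j :=
  sub_nonneg.2 (bcoef_anti_s18 hp0 hp1 (Nat.sub_le j 1))

lemma memE_mono (hp0 : 0 < p) (hp1 : p < 1) {x y : ℕ → ℝ} {k : ℕ}
    (h : ∀ m ≤ k, x m ≤ y m) : memE p x k ≤ memE p y k := by
  unfold memE
  gcongr with j hj
  · exact (bcoef_pos hp0 k).le
  · exact h 0 (Nat.zero_le k)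
  · exact bdiff_nonneg hp0 hp1 (Finset.mem_Icc.1 hj).1
  · exact h _ (by have := (Finset.mem_Icc.1 hj); omega)

lemma memE_const (hp0 : 0 < p) (c : ℝ) (k : ℕ) : memE p (fun _ => c) k = c := by
  unfold memE
  rw [← Finset.sum_mul, bcoef_sum_Icc hp0, bcoef_zero_s18 hp0]
  ring

lemma memE_le (hp0 : 0 < p) (hp1 : p < 1) {x : ℕ → ℝ} {k : ℕ} {B : ℝ}
    (h : ∀ m ≤ k, x m ≤ B) : memE p x k ≤ B := by
  have := memE_mono hp0 hp1 (y := fun _ => B) h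
  rwa [memE_const hp0] at this

lemma memE_nonneg (hp0 : 0 < p) (hp1 : p < 1) {x : ℕ → ℝ} {k : ℕ}
    (h : ∀ m ≤ k, 0 ≤ x m) : 0 ≤ memE p x k := by
  have := memE_mono hp0 hp1 (x := fun _ => (0:ℝ)) (y := x) (k := k) h
  rwa [memE_const hp0] at this

lemma memE_pos (hp0 : 0 < p) (hp1 : p < 1) {x : ℕ → ℝ} {k : ℕ}
    (h0 : 0 < x 0) (h : ∀ m ≤ k, 0 ≤ x m) : 0 < memE p x k := by
  have h1 : 0 < bcoef p k * x 0 := mul_pos (bcoef_pos hp0 k) h0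
  have h2 : 0 ≤ ∑ j ∈ Finset.Icc 1 k, (bcoef p (j - 1) - bcoef p j) * x (k + 1 - j) := by
    apply Finset.sum_nonneg
    intro j hj
    have hj' := Finset.mem_Icc.1 hj
    exact mul_nonneg (bdiff_nonneg hp0 hp1 hj'.1) (h _ (by omega))
  unfold memE; linarith

lemma memE_add (p : ℝ) (x y : ℕ → ℝ) (k : ℕ) :
    memE p (fun m => x m + y m) k = memE p x k + memE p y k := by
  unfold memE
  simp only
  rw [show (∑ j ∈ Finset.Icc 1 k, (bcoef p (j - 1) - bcoef p j) * (x (k+1-j) + y (k+1-j)))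
      = (∑ j ∈ Finset.Icc 1 k, ((bcoef p (j - 1) - bcoef p j) * x (k+1-j)
        + (bcoef p (j - 1) - bcoef p j) * y (k+1-j))) from
      Finset.sum_congr rfl (fun j _ => by ring), Finset.sum_add_distrib]
  ring

lemma memE_sum {ι : Type*} (p : ℝ) (t : Finset ι) (x : ι → ℕ → ℝ) (k : ℕ) :
    memE p (fun m => ∑ n ∈ t, x n m) k = ∑ n ∈ t, memE p (x n) k := by
  unfold memE
  rw [Finset.sum_add_distrib, Finset.mul_sum, Finset.sum_comm]
  congr 1
  apply Finset.sum_congr rfl; intro j _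
  rw [Finset.mul_sum]

/-- Key eventual bound on the memory term. -/
lemma memE_eventual (hp0 : 0 < p) (hp1 : p < 1) {x : ℕ → ℝ} {B Λ ε : ℝ}
    (hx0 : ∀ m, 0 ≤ x m) (hxB : ∀ m, x m ≤ B) (hΛ : 0 ≤ Λ)
    (hev : ∀ᶠ m in atTop, x m ≤ Λ) (hε : 0 < ε) :
    ∀ᶠ k in atTop, memE p x k ≤ Λ + ε := by
  have hB0 : 0 ≤ B := le_trans (hx0 0) (hxB 0)
  obtain ⟨N₀, hN⟩ := eventually_atTop.1 hev
  set N := max N₀ 1 with hNdef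
  have hN1 : 1 ≤ N := le_max_right _ _
  have hNx : ∀ m, N ≤ m → x m ≤ Λ := fun m hm => hN m (le_trans (le_max_left _ _) hm)
  -- eventually 2*B*bcoef p (k+1-N) ≤ ε
  have htend : Tendsto (fun k : ℕ => bcoef p (k + 1 - N)) atTop (nhds 0) := by
    apply (bcoef_tendsto hp0 hp1).comp
    apply tendsto_atTop_atTop.2
    intro b
    exact ⟨b + N, fun a ha => by omega⟩
  have hev2 : ∀ᶠ k in atTop, bcoef p (k + 1 - N) * (2 * B + 1) ≤ ε := by
    have : ∀ᶠ k in atTop, bcoef p (k + 1 - N) < ε / (2 * B + 1) := by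
      apply (htend.eventually (eventually_lt_nhds (show (0:ℝ) < ε / (2*B+1) by positivity)))
    filter_upwards [this] with k hk
    have h1 : (0:ℝ) < 2 * B + 1 := by linarith
    calc bcoef p (k+1-N) * (2*B+1) ≤ ε / (2*B+1) * (2*B+1) := by nlinarith
      _ = ε := by field_simp
  filter_upwards [hev2, eventually_ge_atTop N] with k hk hkN
  set m := k + 1 - N with hm
  have hm1 : 1 ≤ m := by omega
  have hmk : m ≤ k := by omega
  have hsplit : Finset.Icc 1 k = Finset.Ioc 0 m ∪ Finset.Ioc m k := by
    ext j; simp [Finset.mem_Icc, Finset.mem_Ioc, Finset.mem_union]; omega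
  have hdisj : Disjoint (Finset.Ioc 0 m) (Finset.Ioc m k) := by
    simp [Finset.disjoint_left, Finset.mem_Ioc]; omega
  have hsum : memE p x k = bcoef p k * x 0
      + ∑ j ∈ Finset.Ioc 0 m, (bcoef p (j-1) - bcoef p j) * x (k+1-j)
      + ∑ j ∈ Finset.Ioc m k, (bcoef p (j-1) - bcoef p j) * x (k+1-j) := by
    unfold memE
    rw [hsplit, Finset.sum_union hdisj]; ring
  have h1 : bcoef p k * x 0 ≤ bcoef p m * B :=
    mul_le_mul (bcoef_anti_s18 hp0 hp1 hmk) (hxB 0) (hx0 0) (bcoef_pos hp0 m).le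
  have h2 : ∑ j ∈ Finset.Ioc 0 m, (bcoef p (j-1) - bcoef p j) * x (k+1-j) ≤ Λ := by
    calc ∑ j ∈ Finset.Ioc 0 m, (bcoef p (j-1) - bcoef p j) * x (k+1-j)
        ≤ ∑ j ∈ Finset.Ioc 0 m, (bcoef p (j-1) - bcoef p j) * Λ := by
          apply Finset.sum_le_sum
          intro j hj
          have hj' := Finset.mem_Ioc.1 hj
          have : x (k+1-j) ≤ Λ := hNx _ (by omega)
          exact mul_le_mul_of_nonneg_left this (bdiff_nonneg hp0 hp1 hj'.1)
      _ = (bcoef p 0 - bcoef p m) * Λ := by rw [← Finset.sum_mul, bcoef_sum_Ioc hp0 (Nat.zero_le m)]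
      _ ≤ 1 * Λ := by
          apply mul_le_mul_of_nonneg_right _ hΛ
          have := (bcoef_pos hp0 m)
          rw [bcoef_zero_s18 hp0]; linarith
      _ = Λ := one_mul Λ
  have h3 : ∑ j ∈ Finset.Ioc m k, (bcoef p (j-1) - bcoef p j) * x (k+1-j)
      ≤ (bcoef p m - bcoef p k) * B := by
    calc ∑ j ∈ Finset.Ioc m k, (bcoef p (j-1) - bcoef p j) * x (k+1-j)
        ≤ ∑ j ∈ Finset.Ioc m k, (bcoef p (j-1) - bcoef p j) * B := by
          apply Finset.sum_le_sum
          intro j hj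
          have hj' := Finset.mem_Ioc.1 hj
          exact mul_le_mul_of_nonneg_left (hxB _) (bdiff_nonneg hp0 hp1 (by omega))
      _ = (bcoef p m - bcoef p k) * B := by rw [← Finset.sum_mul, bcoef_sum_Ioc hp0 hmk]
  have hbk : 0 < bcoef p k := bcoef_pos hp0 k
  have : memE p x k ≤ Λ + 2 * bcoef p m * B := by
    rw [hsum]; nlinarith
  calc memE p x k ≤ Λ + 2 * bcoef p m * B := this
    _ ≤ Λ + ε := by nlinarith [bcoef_pos hp0 m, hk]

lemma memE_eventual_ge (hp0 : 0 < p) (hp1 : p < 1) {x : ℕ → ℝ} {Λ ε : ℝ}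
    (hx0 : ∀ m, 0 ≤ x m) (hΛ : 0 ≤ Λ)
    (hev : ∀ᶠ m in atTop, Λ ≤ x m) (hε : 0 < ε) :
    ∀ᶠ k in atTop, Λ - ε ≤ memE p x k := by
  obtain ⟨N₀, hN⟩ := eventually_atTop.1 hev
  set N := max N₀ 1 with hNdef
  have hN1 : 1 ≤ N := le_max_right _ _
  have hNx : ∀ m, N ≤ m → Λ ≤ x m := fun m hm => hN m (le_trans (le_max_left _ _) hm)
  have htend : Tendsto (fun k : ℕ => bcoef p (k + 1 - N)) atTop (nhds 0) := by
    apply (bcoef_tendsto hp0 hp1).comp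
    apply tendsto_atTop_atTop.2
    intro b
    exact ⟨b + N, fun a ha => by omega⟩
  have hev2 : ∀ᶠ k in atTop, bcoef p (k + 1 - N) * (Λ + 1) ≤ ε := by
    have : ∀ᶠ k in atTop, bcoef p (k + 1 - N) < ε / (Λ+1) := by
      apply (htend.eventually (eventually_lt_nhds (show (0:ℝ) < ε / (Λ+1) by positivity)))
    filter_upwards [this] with k hk
    have h1 : (0:ℝ) < Λ + 1 := by linarith
    calc bcoef p (k+1-N) * (Λ+1) ≤ ε / (Λ+1) * (Λ+1) := by nlinarith
      _ = ε := by field_simp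
  filter_upwards [hev2, eventually_ge_atTop N] with k hk hkN
  set m := k + 1 - N with hm
  have hm1 : 1 ≤ m := by omega
  have hmk : m ≤ k := by omega
  have h2 : (bcoef p 0 - bcoef p m) * Λ ≤ ∑ j ∈ Finset.Ioc 0 m, (bcoef p (j-1) - bcoef p j) * x (k+1-j) := by
    rw [← bcoef_sum_Ioc hp0 (Nat.zero_le m), Finset.sum_mul]
    apply Finset.sum_le_sum
    intro j hj
    have hj' := Finset.mem_Ioc.1 hj
    exact mul_le_mul_of_nonneg_left (hNx _ (by omega)) (bdiff_nonneg hp0 hp1 hj'.1)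
  have hrest : 0 ≤ bcoef p k * x 0
      + ∑ j ∈ Finset.Ioc m k, (bcoef p (j-1) - bcoef p j) * x (k+1-j) := by
    have : 0 ≤ ∑ j ∈ Finset.Ioc m k, (bcoef p (j-1) - bcoef p j) * x (k+1-j) :=
      Finset.sum_nonneg fun j hj =>
        mul_nonneg (bdiff_nonneg hp0 hp1 (by have := (Finset.mem_Ioc.1 hj); omega)) (hx0 _)
    have h0 : 0 ≤ bcoef p k * x 0 := mul_nonneg (bcoef_pos hp0 k).le (hx0 0)
    linarith
  have hsplit : Finset.Icc 1 k = Finset.Ioc 0 m ∪ Finset.Ioc m k := by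
    ext j; simp [Finset.mem_Icc, Finset.mem_Ioc, Finset.mem_union]; omega
  have hdisj : Disjoint (Finset.Ioc 0 m) (Finset.Ioc m k) := by
    simp [Finset.disjoint_left, Finset.mem_Ioc]; omega
  have hsum : memE p x k = bcoef p k * x 0
      + ∑ j ∈ Finset.Ioc 0 m, (bcoef p (j-1) - bcoef p j) * x (k+1-j)
      + ∑ j ∈ Finset.Ioc m k, (bcoef p (j-1) - bcoef p j) * x (k+1-j) := by
    unfold memE
    rw [hsplit, Finset.sum_union hdisj]; ring
  have hb0 : bcoef p 0 = 1 := bcoef_zero_s18 hp0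
  have hbm : 0 < bcoef p m := bcoef_pos hp0 m
  have : Λ - bcoef p m * Λ ≤ ∑ j ∈ Finset.Ioc 0 m, (bcoef p (j-1) - bcoef p j) * x (k+1-j) := by
    calc Λ - bcoef p m * Λ = (bcoef p 0 - bcoef p m) * Λ := by rw [hb0]; ring
      _ ≤ _ := h2
  rw [hsum]
  nlinarith [hbm, hk]

end MemE
section Comp

variable {p : ℝ}

lemma comp_sup (hp0 : 0 < p) (hp1 : p < 1) {x c : ℕ → ℝ} {B C a : ℝ}
    (hx0 : ∀ k, 0 ≤ x k) (hxB : ∀ k, x k ≤ B) (ha : 0 < a)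
    (hrec : ∀ k, x (k+1) * (1 + a) ≤ memE p x k + c k)
    (hc : ∀ᶠ k in atTop, c k ≤ C) :
    Filter.limsup x atTop ≤ C / a := by
  have hbd : Filter.IsBoundedUnder (· ≤ ·) atTop x := Filter.isBoundedUnder_of ⟨B, hxB⟩
  have hcb : Filter.IsCoboundedUnder (· ≤ ·) atTop x :=
    Filter.isCoboundedUnder_le_of_le atTop hx0
  set L := Filter.limsup x atTop with hLdef
  have hL0 : 0 ≤ L :=
    Filter.le_limsup_of_frequently_le (Filter.Frequently.of_forall hx0) hbd
  have key : ∀ ε > (0:ℝ), L * (1 + a) ≤ L + C + ε := by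
    intro ε hε
    set ε₁ := ε / (3 + a) with hε₁def
    have hε₁ : 0 < ε₁ := by positivity
    have ev1 : ∀ᶠ m in atTop, x m ≤ L + ε₁ := by
      filter_upwards [Filter.eventually_lt_of_limsup_lt (show L < L + ε₁ by linarith) hbd]
        with m hm using hm.le
    have ev2 : ∀ᶠ k in atTop, memE p x k ≤ (L + ε₁) + ε₁ :=
      memE_eventual hp0 hp1 hx0 hxB (by linarith) ev1 hε₁
    obtain ⟨N, hN⟩ := eventually_atTop.1 (ev2.and hc)
    have freq : ∃ᶠ k in atTop, L - ε₁ < x k :=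
      Filter.frequently_lt_of_lt_limsup hcb (by linarith)
    obtain ⟨k, hkx, hkN⟩ := (freq.and_eventually (eventually_ge_atTop (N+1))).exists
    have hk1 : 1 ≤ k := by omega
    have hk' : N ≤ k - 1 := by omega
    obtain ⟨hmem, hck⟩ := hN (k-1) hk'
    have hkk : k - 1 + 1 = k := by omega
    have := hrec (k-1)
    rw [hkk] at this
    have hx1 : (L - ε₁) * (1 + a) < x k * (1 + a) := by
      apply mul_lt_mul_of_pos_right hkx (by linarith)
    have : (L - ε₁) * (1 + a) ≤ L + 2 * ε₁ + C := by nlinarith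
    have hee : ε₁ * (3 + a) = ε := by
      rw [hε₁def]; field_simp
    nlinarith
  have h2 : L * (1 + a) ≤ L + C :=
    le_of_forall_pos_le_add (fun ε hε => by linarith [key ε hε])
  rw [le_div_iff₀ ha]
  nlinarith

lemma comp_inf (hp0 : 0 < p) (hp1 : p < 1) {x c : ℕ → ℝ} {B C a : ℝ}
    (hx0 : ∀ k, 0 ≤ x k) (hxB : ∀ k, x k ≤ B) (ha : 0 < a)
    (hrec : ∀ k, memE p x k + c k ≤ x (k+1) * (1 + a))
    (hc : ∀ᶠ k in atTop, C ≤ c k) :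
    C / a ≤ Filter.liminf x atTop := by
  have hbd : Filter.IsBoundedUnder (· ≥ ·) atTop x := Filter.isBoundedUnder_of ⟨0, hx0⟩
  have hbd' : Filter.IsBoundedUnder (· ≤ ·) atTop x := Filter.isBoundedUnder_of ⟨B, hxB⟩
  have hcb : Filter.IsCoboundedUnder (· ≥ ·) atTop x :=
    Filter.isCoboundedUnder_ge_of_le atTop hxB
  set l := Filter.liminf x atTop with hldef
  have hl0 : 0 ≤ l := Filter.le_liminf_of_le hcb (Filter.Eventually.of_forall hx0)
  have key : ∀ ε > (0:ℝ), C ≤ l * a + ε := by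
    intro ε hε
    set ε₁ := ε / (3 + a) with hε₁def
    have hε₁ : 0 < ε₁ := by positivity
    set Λ := max (l - ε₁) 0 with hΛdef
    have hΛ0 : 0 ≤ Λ := le_max_right _ _
    have hΛl : l - ε₁ ≤ Λ := le_max_left _ _
    have ev1 : ∀ᶠ m in atTop, Λ ≤ x m := by
      have h' : ∀ᶠ m in atTop, l - ε₁ < x m :=
        Filter.eventually_lt_of_lt_liminf (by linarith) hbd
      filter_upwards [h'] with m hm
      rcases le_or_gt Λ (l - ε₁) with h | h
      · linarith
      · have : Λ = 0 := by
          rcases max_cases (l - ε₁) (0:ℝ) with ⟨h1, h2⟩ | ⟨h1, h2⟩ <;> simp [hΛdef] at * <;> linarith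
        rw [this]; exact hx0 m
    have ev2 : ∀ᶠ k in atTop, Λ - ε₁ ≤ memE p x k :=
      memE_eventual_ge hp0 hp1 hx0 hΛ0 ev1 hε₁
    obtain ⟨N, hN⟩ := eventually_atTop.1 (ev2.and hc)
    have freq : ∃ᶠ k in atTop, x k < l + ε₁ :=
      Filter.frequently_lt_of_liminf_lt hcb (by linarith)
    obtain ⟨k, hkx, hkN⟩ := (freq.and_eventually (eventually_ge_atTop (N+1))).exists
    have hk1 : 1 ≤ k := by omega
    obtain ⟨hmem, hck⟩ := hN (k-1) (by omega)
    have hkk : k - 1 + 1 = k := by omega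
    have hrk := hrec (k-1)
    rw [hkk] at hrk
    have hx1 : x k * (1 + a) < (l + ε₁) * (1 + a) :=
      mul_lt_mul_of_pos_right hkx (by linarith)
    have h5 : Λ - ε₁ + C ≤ (l + ε₁) * (1 + a) := by nlinarith
    have h6 : l - 2*ε₁ + C ≤ (l + ε₁) * (1 + a) := by nlinarith
    have hee : ε₁ * (3 + a) = ε := by rw [hε₁def]; field_simp
    nlinarith
  have h2 : C ≤ l * a := le_of_forall_pos_le_add key
  rw [div_le_iff₀ ha]
  linarith

end Comp
lemma memE_bound_seq {p : ℝ} (hp0 : 0 < p) (hp1 : p < 1) {x : ℕ → ℝ} {a cc : ℝ}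
    (ha : 0 < a) (hx0 : ∀ m, 0 ≤ x m)
    (hrec : ∀ k, x (k+1) * (1+a) ≤ memE p x k + cc) :
    ∀ k, x k ≤ max (x 0) (cc / a) := by
  set B := max (x 0) (cc / a) with hB
  have hccB : cc ≤ a * B := by
    have h1 : cc / a ≤ B := le_max_right _ _
    calc cc = a * (cc / a) := by field_simp
      _ ≤ a * B := by nlinarith
  have key : ∀ k, ∀ m ≤ k, x m ≤ B := by
    intro k
    induction k with
    | zero => intro m hm; have : m = 0 := Nat.le_zero.1 hm; rw [this]; exact le_max_left _ _
    | succ k ih =>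
      intro m hm
      rcases Nat.lt_succ_iff_lt_or_eq.1 (Nat.lt_succ_of_le hm) with h | h
      · exact ih m (Nat.lt_succ_iff.1 h)
      · rw [h]
        have h1 : memE p x k ≤ B := memE_le hp0 hp1 ih
        have h2 := hrec k
        have h3 : x (k+1) * (1+a) ≤ B * (1+a) := by nlinarith
        have h4 : 0 < 1 + a := by linarith
        exact le_of_mul_le_mul_right (by linarith [h3]) h4
  exact fun k => key k k le_rfl
set_option maxHeartbeats 1000000 in
/-- The analytic core: limit behaviour of the max/min sequences. -/
lemma final_part {p g lam β γ μ r δ r1 K KR : ℝ} {f f' : ℝ → ℝ} {VS wI ρR mS : ℕ → ℝ}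
    (hp0 : 0 < p) (hp1 : p < 1) (hg : 0 < g) (hlam : 0 < lam) (hβ : 0 < β) (hγ : 0 < γ)
    (hμr : 0 < μ + r) (hrp : 0 < r) (hδ : 0 < δ) (hr1p : 0 ≤ r1) (hK0 : 0 < K)
    (hfc : ∀ y : ℝ, 0 ≤ y → ContinuousWithinAt f (Set.Ici 0) y)
    (hf0 : f 0 = 0) (hfpos : ∀ y : ℝ, 0 < y → 0 < f y)
    (hfnn : ∀ y : ℝ, 0 ≤ y → 0 ≤ f y)
    (hfmono' : ∀ a b : ℝ, 0 ≤ a → a ≤ b → f a ≤ f b)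
    (hA3 : ∀ y : ℝ, 0 ≤ y → f y ≤ y * f' 0)
    (hR0' : β * lam * f' 0 ≤ γ * (μ + r))
    (hVS0 : ∀ k, 0 ≤ VS k) (hVSK : ∀ k, VS k ≤ K)
    (hwI0 : ∀ k, 0 ≤ wI k) (hwIK : ∀ k, wI k ≤ K)
    (hρR0 : ∀ k, 0 ≤ ρR k) (hρRK : ∀ k, ρR k ≤ KR)
    (hmS0 : ∀ k, 0 ≤ mS k) (hmSK : ∀ k, mS k ≤ K)
    (hVSrec : ∀ k, VS (k+1) * (1 + g*γ) ≤ memE p VS k + g*lam)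
    (hwIrec : ∀ k, ∃ s φ : ℝ, 0 ≤ s ∧ 0 ≤ φ ∧ φ ≤ f (wI k) ∧
      s * ((1 + 2*r1 + g*γ) + g*β*φ) ≤ 2*r1*VS (k+1) + memE p VS k + g*lam ∧
      wI (k+1) * (1 + g*(μ+r)) ≤ memE p wI k + g*β*s*φ)
    (hρRrec : ∀ k, ρR (k+1) * (1 + g*δ) ≤ memE p ρR k + g*r*wI (k+1))
    (hmSrec : ∀ k, memE p mS k + (g*lam - g*β*K*f (wI k)) ≤ mS (k+1) * (1 + g*γ)) :
    Filter.Tendsto wI Filter.atTop (nhds 0) ∧ Filter.limsup VS Filter.atTop ≤ lam/γ ∧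
      lam/γ ≤ Filter.liminf mS Filter.atTop ∧ Filter.Tendsto ρR Filter.atTop (nhds 0) := by
  have hbVS : Filter.IsBoundedUnder (· ≤ ·) atTop VS := Filter.isBoundedUnder_of ⟨K, hVSK⟩
  have hbw : Filter.IsBoundedUnder (· ≤ ·) atTop wI := Filter.isBoundedUnder_of ⟨K, hwIK⟩
  have hcw : Filter.IsCoboundedUnder (· ≤ ·) atTop wI :=
    Filter.isCoboundedUnder_le_of_le atTop hwI0
  -- P3 : limsup VS ≤ lam/γ
  have hVSls : Filter.limsup VS atTop ≤ lam/γ := by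
    have h := comp_sup hp0 hp1 hVS0 hVSK (mul_pos hg hγ) hVSrec
      (Filter.Eventually.of_forall (fun k => le_refl (g*lam)))
    have h2 : g * lam / (g * γ) = lam / γ := mul_div_mul_left lam γ (ne_of_gt hg)
    rwa [h2] at h
  -- P4 : wI → 0
  set L := Filter.limsup wI atTop with hLdef
  have hL0 : 0 ≤ L :=
    Filter.le_limsup_of_frequently_le (Filter.Frequently.of_forall hwI0) hbw
  have hwten : Filter.Tendsto wI atTop (nhds 0) := by
    have hLle : L ≤ 0 := by
      by_contra hcon
      push_neg at hcon
      have hfL : 0 < f L := hfpos L hcon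
      have hA0 : 0 < 1 + 2*r1 + g*γ := by nlinarith [mul_pos hg hγ]
      have hS0p : 0 < lam/γ := div_pos hlam hγ
      have key : ∀ ε : ℝ, 0 < ε →
          L * (g*(μ+r)) ≤ ((1 + 2*r1 + g*γ)*(lam/γ) + ε) * (g*β*f (L+ε)) / ((1 + 2*r1 + g*γ) + g*β*f (L+ε)) := by
        intro ε hε
        have hfLε : 0 ≤ f (L+ε) := hfnn _ (by linarith)
        have hden : 0 < (1 + 2*r1 + g*γ) + g*β*f (L+ε) := by
          nlinarith [mul_nonneg (mul_nonneg hg.le hβ.le) hfLε]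
        obtain ⟨ε₂, hε₂def⟩ : ∃ t : ℝ, t = ε / (2*r1+2) := ⟨_, rfl⟩
        have hε₂ : 0 < ε₂ := by rw [hε₂def]; positivity
        have e1 : ∀ᶠ k in atTop, VS k ≤ lam/γ + ε₂/2 := by
          have := Filter.eventually_lt_of_limsup_lt
            (lt_of_le_of_lt hVSls (show lam/γ < lam/γ + ε₂/2 by linarith)) hbVS
          filter_upwards [this] with k hk using hk.le
        have e1' : ∀ᶠ k in atTop, VS (k+1) ≤ lam/γ + ε₂ := by
          obtain ⟨N, hN⟩ := Filter.eventually_atTop.1 e1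
          exact Filter.eventually_atTop.2
            ⟨N, fun k hk => le_trans (hN (k+1) (by omega)) (by linarith)⟩
        have e2 : ∀ᶠ k in atTop, memE p VS k ≤ (lam/γ + ε₂/2) + ε₂/2 :=
          memE_eventual hp0 hp1 hVS0 hVSK (by linarith) e1 (by linarith)
        have e3 : ∀ᶠ k in atTop, wI k ≤ L + ε := by
          have := Filter.eventually_lt_of_limsup_lt (show L < L + ε by linarith) hbw
          filter_upwards [this] with k hk using hk.le
        obtain ⟨c, hcdef⟩ : ∃ c : ℕ → ℝ,
            c = fun k => wI (k+1) * (1 + g*(μ+r)) - memE p wI k := ⟨_, rfl⟩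
        have hrecw : ∀ k, wI (k+1) * (1 + g*(μ+r)) ≤ memE p wI k + c k := by
          intro k
          have h0 : c k = wI (k+1) * (1 + g*(μ+r)) - memE p wI k := by rw [hcdef]
          linarith [h0]
        have hcC : ∀ᶠ k in atTop,
            c k ≤ ((1 + 2*r1 + g*γ)*(lam/γ) + ε) * (g*β*f (L+ε)) / ((1 + 2*r1 + g*γ) + g*β*f (L+ε)) := by
          filter_upwards [e1', e2, e3] with k h1 h2 h3
          obtain ⟨s, φ, hs0, hφ0, hφle, hcouple, hwrec⟩ := hwIrec k
          have hφle2 : φ ≤ f (L+ε) := le_trans hφle (hfmono' _ _ (hwI0 k) h3)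
          have hD : 2*r1*VS (k+1) + memE p VS k + g*lam ≤ (1 + 2*r1 + g*γ)*(lam/γ) + ε := by
            have hglam : g*lam = g*γ*(lam/γ) := by field_simp
            have hεsplit : (2*r1+2)*ε₂ = ε := by rw [hε₂def]; field_simp
            nlinarith [mul_le_mul_of_nonneg_left h1 hr1p, hglam, hεsplit, h2]
          have hden2 : 0 < (1 + 2*r1 + g*γ) + g*β*φ := by
            nlinarith [mul_nonneg (mul_nonneg hg.le hβ.le) hφ0]
          have ht1 : g*β*s*φ ≤ ((1 + 2*r1 + g*γ)*(lam/γ)+ε) * (g*β*φ) / ((1 + 2*r1 + g*γ) + g*β*φ) := by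
            rw [le_div_iff₀ hden2]
            have h5 : s * ((1 + 2*r1 + g*γ) + g*β*φ) ≤ (1 + 2*r1 + g*γ)*(lam/γ)+ε := le_trans hcouple hD
            have h6 : 0 ≤ g*β*φ := mul_nonneg (mul_nonneg hg.le hβ.le) hφ0
            have h7 := mul_le_mul_of_nonneg_left h5 h6
            calc g*β*s*φ * ((1 + 2*r1 + g*γ) + g*β*φ)
                = (g*β*φ) * (s * ((1 + 2*r1 + g*γ) + g*β*φ)) := by ring
              _ ≤ (g*β*φ) * ((1 + 2*r1 + g*γ)*(lam/γ)+ε) := h7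
              _ = ((1 + 2*r1 + g*γ)*(lam/γ)+ε) * (g*β*φ) := by ring
          have ht2 : ((1 + 2*r1 + g*γ)*(lam/γ)+ε) * (g*β*φ) / ((1 + 2*r1 + g*γ) + g*β*φ)
              ≤ ((1 + 2*r1 + g*γ)*(lam/γ)+ε) * (g*β*f (L+ε)) / ((1 + 2*r1 + g*γ) + g*β*f (L+ε)) := by
            rw [div_le_div_iff₀ hden2 hden]
            have hAS : 0 ≤ (1 + 2*r1 + g*γ)*(lam/γ)+ε := by nlinarith [hA0, hS0p]
            have hgb : 0 ≤ g*β := mul_nonneg hg.le hβ.le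
            have h9 : 0 ≤ g*β*f (L+ε) - g*β*φ := by
              nlinarith [mul_le_mul_of_nonneg_left hφle2 hgb]
            have h8 : 0 ≤ ((1 + 2*r1 + g*γ)*(lam/γ)+ε) *
                ((1 + 2*r1 + g*γ) * (g*β*f (L+ε) - g*β*φ)) :=
              mul_nonneg hAS (mul_nonneg hA0.le h9)
            nlinarith [h8]
          have h0 : c k = wI (k+1) * (1 + g*(μ+r)) - memE p wI k := by rw [hcdef]
          rw [h0]
          calc wI (k+1) * (1 + g*(μ+r)) - memE p wI k ≤ g*β*s*φ := by linarith [hwrec]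
            _ ≤ _ := le_trans ht1 ht2
        have hcomp := comp_sup hp0 hp1 hwI0 hwIK (mul_pos hg hμr) hrecw hcC
        exact (le_div_iff₀ (mul_pos hg hμr)).1 hcomp
      have hseq : Filter.Tendsto (fun n : ℕ => L + 1/((n:ℝ)+1)) atTop (nhds L) := by
        simpa using tendsto_one_div_add_atTop_nhds_zero_nat.const_add L
      have hfseq : Filter.Tendsto (fun n : ℕ => f (L + 1/((n:ℝ)+1))) atTop (nhds (f L)) := by
        apply ((hfc L (by linarith)).tendsto).comp
        rw [tendsto_nhdsWithin_iff]
        constructor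
        · exact hseq
        · apply Filter.Eventually.of_forall
          intro n
          have h8 : (0:ℝ) < 1/((n:ℝ)+1) := by positivity
          exact Set.mem_Ici.2 (by linarith)
      have hdne : ((1 + 2*r1 + g*γ) + g*β*f L) ≠ 0 := by
        have : 0 < g*β*f L := mul_pos (mul_pos hg hβ) hfL
        nlinarith
      have hFlim : Filter.Tendsto (fun n : ℕ =>
          ((1 + 2*r1 + g*γ)*(lam/γ) + 1/((n:ℝ)+1)) * (g*β*f (L + 1/((n:ℝ)+1))) / ((1 + 2*r1 + g*γ) + g*β*f (L + 1/((n:ℝ)+1))))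
          atTop (nhds (((1 + 2*r1 + g*γ)*(lam/γ)) * (g*β*f L) / ((1 + 2*r1 + g*γ) + g*β*f L))) := by
        have h1 : Filter.Tendsto (fun n : ℕ => (1 + 2*r1 + g*γ)*(lam/γ) + 1/((n:ℝ)+1)) atTop
            (nhds ((1 + 2*r1 + g*γ)*(lam/γ))) := by
          simpa using tendsto_one_div_add_atTop_nhds_zero_nat.const_add ((1 + 2*r1 + g*γ)*(lam/γ))
        have h3 : Filter.Tendsto (fun n : ℕ => g*β*f (L + 1/((n:ℝ)+1))) atTop
            (nhds (g*β*f L)) := by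
          have := hfseq.const_mul (g*β)
          simpa [mul_comm] using this
        have h4 : Filter.Tendsto (fun n : ℕ => (1 + 2*r1 + g*γ) + g*β*f (L + 1/((n:ℝ)+1))) atTop
            (nhds ((1 + 2*r1 + g*γ) + g*β*f L)) := by
          exact h3.const_add (1 + 2*r1 + g*γ)
        exact Filter.Tendsto.div (h1.mul h3) h4 hdne
      have hle2 : L * (g*(μ+r)) ≤ ((1 + 2*r1 + g*γ)*(lam/γ)) * (g*β*f L) / ((1 + 2*r1 + g*γ) + g*β*f L) :=
        ge_of_tendsto hFlim (Filter.Eventually.of_forall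
          (fun n => key (1/((n:ℝ)+1)) (by positivity)))
      have hgβfL : 0 < g*β*f L := mul_pos (mul_pos hg hβ) hfL
      have hdpos : 0 < (1 + 2*r1 + g*γ) + g*β*f L := by linarith [hA0, hgβfL]
      have hchain1 : ((1 + 2*r1 + g*γ)*(lam/γ)) * (g*β*f L) / ((1 + 2*r1 + g*γ) + g*β*f L) < (lam/γ) * (g*β*f L) := by
        rw [div_lt_iff₀ hdpos]
        nlinarith [mul_pos (mul_pos hS0p hgβfL) hgβfL]
      have hchain2 : (lam/γ) * (g*β*f L) ≤ (lam/γ) * (g*β*(L * f' 0)) := by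
        have h9 := hA3 L (by linarith)
        nlinarith [mul_le_mul_of_nonneg_left h9
          (mul_nonneg (le_of_lt hS0p) (mul_nonneg hg.le hβ.le))]
      have hchain3 : (lam/γ) * (g*β*(L * f' 0)) ≤ L * (g*(μ+r)) := by
        have h7 : 0 < g * L / γ := by positivity
        calc (lam/γ) * (g*β*(L * f' 0)) = (β * lam * f' 0) * (g * L / γ) := by
              field_simp
          _ ≤ (γ*(μ+r)) * (g * L / γ) := by nlinarith [hR0', h7]
          _ = L * (g*(μ+r)) := by field_simp
      linarith
    have hliminf : (0:ℝ) ≤ Filter.liminf wI atTop :=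
      Filter.le_liminf_of_le (Filter.isCoboundedUnder_ge_of_le atTop hwIK)
        (Filter.Eventually.of_forall hwI0)
    exact tendsto_of_le_liminf_of_limsup_le hliminf hLle hbw (Filter.isBoundedUnder_of ⟨0, hwI0⟩)
  -- P6 : liminf mS ≥ lam/γ
  have hmSli : lam/γ ≤ Filter.liminf mS atTop := by
    have hf1 : Filter.Tendsto (fun k => f (wI k)) atTop (nhds 0) := by
      have h1 : Filter.Tendsto wI atTop (nhdsWithin 0 (Set.Ici (0:ℝ))) := by
        rw [tendsto_nhdsWithin_iff]
        exact ⟨hwten, Filter.Eventually.of_forall (fun k => Set.mem_Ici.2 (hwI0 k))⟩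
      have := ((hfc 0 le_rfl).tendsto).comp h1
      rw [hf0] at this
      simpa [Function.comp_def] using this
    have key : ∀ ε : ℝ, 0 < ε → (g*lam - ε)/(g*γ) ≤ Filter.liminf mS atTop := by
      intro ε hε
      apply comp_inf hp0 hp1 hmS0 hmSK (mul_pos hg hγ) hmSrec
      have hgbK : 0 < g*β*K := mul_pos (mul_pos hg hβ) hK0
      have h2 : ∀ᶠ k in atTop, g*β*K*f (wI k) ≤ ε := by
        have := hf1.eventually (eventually_le_nhds (show (0:ℝ) < ε/(g*β*K) by positivity))
        filter_upwards [this] with k hk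
        calc g*β*K*f (wI k) ≤ g*β*K*(ε/(g*β*K)) := by nlinarith
          _ = ε := by field_simp
      filter_upwards [h2] with k hk
      linarith
    have h3 : ∀ ε' : ℝ, 0 < ε' → lam/γ ≤ Filter.liminf mS atTop + ε' := by
      intro ε' hε'
      have h4 := key (ε' * (g*γ)) (by positivity)
      have h5 : (g*lam - ε'*(g*γ))/(g*γ) = lam/γ - ε' := by field_simp
      rw [h5] at h4
      linarith
    exact le_of_forall_pos_le_add h3
  -- P5 : ρR → 0
  have hρten : Filter.Tendsto ρR atTop (nhds 0) := by
    have hρls : Filter.limsup ρR atTop ≤ 0 := by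
      have key : ∀ η : ℝ, 0 < η → Filter.limsup ρR atTop ≤ η := by
        intro η hη
        have hgr : 0 < g*r := mul_pos hg hrp
        have h1 : Filter.Tendsto (fun k => wI (k+1)) atTop (nhds 0) := by
          have := hwten.comp (tendsto_add_atTop_nat 1)
          simpa [Function.comp_def] using this
        have hc : ∀ᶠ k in atTop, g*r*wI (k+1) ≤ (g*δ)*η := by
          have h2 := h1.eventually (eventually_le_nhds
            (show (0:ℝ) < (g*δ*η)/(g*r) by positivity))
          filter_upwards [h2] with k hk
          calc g*r*wI (k+1) ≤ g*r*((g*δ*η)/(g*r)) := by nlinarith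
            _ = (g*δ)*η := by field_simp
        have h4 := comp_sup hp0 hp1 hρR0 hρRK (mul_pos hg hδ) hρRrec hc
        have h5 : (g*δ)*η/(g*δ) = η := by field_simp
        rwa [h5] at h4
      have h6 : ∀ η : ℝ, 0 < η → Filter.limsup ρR atTop ≤ 0 + η := by
        intro η hη; rw [zero_add]; exact key η hη
      exact le_of_forall_pos_le_add h6
    have hliminf : (0:ℝ) ≤ Filter.liminf ρR atTop :=
      Filter.le_liminf_of_le (Filter.isCoboundedUnder_ge_of_le atTop hρRK)
        (Filter.Eventually.of_forall hρR0)
    exact tendsto_of_le_liminf_of_limsup_le hliminf hρls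
      (Filter.isBoundedUnder_of ⟨KR, hρRK⟩) (Filter.isBoundedUnder_of ⟨0, hρR0⟩)
  exact ⟨hwten, hVSls, hmSli, hρten⟩


set_option maxHeartbeats 2000000 in
/-- Theorem 3.3, global asymptotic stability of the disease-free
equilibrium `E₀ = (λ/γ, 0, 0)` of the discrete system (6) when `R₀ ≤ 1`. -/
theorem stmt_18
    (f f' : ℝ → ℝ)
    (hderiv : ∀ x ∈ Set.Ici (0 : ℝ), HasDerivWithinAt f (f' x) (Set.Ici 0) x)
    (hf'cont : ContinuousOn f' (Set.Ici 0))
    (hA1 : f 0 = 0 ∧ ∀ y : ℝ, 0 < y → 0 < f y)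
    (hA2 : (∀ y : ℝ, 0 ≤ y → 0 < f' y) ∧ AntitoneOn (fun y => f y / y) (Set.Ioi 0))
    (hA3 : ∀ y : ℝ, 0 ≤ y → f y ≤ y * f' 0)
    (M : ℕ) (hM : 1 ≤ M)
    (α Δt Δx d1 d2 d3 lam β γ μ r δ : ℝ)
    (hα0 : 0 < α) (hα1 : α < 1) (hΔt : 0 < Δt) (hΔx : 0 < Δx)
    (hd1 : 0 < d1) (hd2 : 0 < d2) (hd3 : 0 < d3)
    (hlam : 0 < lam) (hβ : 0 < β) (hγ : 0 < γ) (hμ : 0 < μ) (hr : 0 < r) (hδ : 0 < δ)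
    (S I R : ℕ → ℤ → ℝ)
    (hS : ∀ (k : ℕ) (n : ℤ), 0 ≤ n → n ≤ (M : ℤ) →
      S (k + 1) n - d1 * Real.Gamma (2 - α) * Δt ^ α / Δx ^ 2 *
          (S (k + 1) (n - 1) - 2 * S (k + 1) n + S (k + 1) (n + 1)) =
        bcoef (1 - α) k * S 0 n +
          (∑ j ∈ Finset.Icc 1 k, (bcoef (1 - α) (j - 1) - bcoef (1 - α) j) * S (k + 1 - j) n) +
          Real.Gamma (2 - α) * Δt ^ α *
            (lam - β * S (k + 1) n * f (I k n) - γ * S (k + 1) n))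
    (hI : ∀ (k : ℕ) (n : ℤ), 0 ≤ n → n ≤ (M : ℤ) →
      I (k + 1) n - d2 * Real.Gamma (2 - α) * Δt ^ α / Δx ^ 2 *
          (I (k + 1) (n - 1) - 2 * I (k + 1) n + I (k + 1) (n + 1)) =
        bcoef (1 - α) k * I 0 n +
          (∑ j ∈ Finset.Icc 1 k, (bcoef (1 - α) (j - 1) - bcoef (1 - α) j) * I (k + 1 - j) n) +
          Real.Gamma (2 - α) * Δt ^ α *
            (β * S (k + 1) n * f (I k n) - (μ + r) * I (k + 1) n))
    (hR : ∀ (k : ℕ) (n : ℤ), 0 ≤ n → n ≤ (M : ℤ) →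
      R (k + 1) n - d3 * Real.Gamma (2 - α) * Δt ^ α / Δx ^ 2 *
          (R (k + 1) (n - 1) - 2 * R (k + 1) n + R (k + 1) (n + 1)) =
        bcoef (1 - α) k * R 0 n +
          (∑ j ∈ Finset.Icc 1 k, (bcoef (1 - α) (j - 1) - bcoef (1 - α) j) * R (k + 1 - j) n) +
          Real.Gamma (2 - α) * Δt ^ α *
            (r * I (k + 1) n - δ * R (k + 1) n))
    (hSbc : ∀ k : ℕ, S k (-1) = S k 0 ∧ S k ((M : ℤ) + 1) = S k (M : ℤ))
    (hIbc : ∀ k : ℕ, I k (-1) = I k 0 ∧ I k ((M : ℤ) + 1) = I k (M : ℤ))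
    (hRbc : ∀ k : ℕ, R k (-1) = R k 0 ∧ R k ((M : ℤ) + 1) = R k (M : ℤ))
    (hSinit : ∀ n : ℤ, 0 ≤ n → n ≤ (M : ℤ) → 0 < S 0 n)
    (hIinit : ∀ n : ℤ, 0 ≤ n → n ≤ (M : ℤ) → 0 < I 0 n)
    (hRinit : ∀ n : ℤ, 0 ≤ n → n ≤ (M : ℤ) → 0 < R 0 n)
    (hR0 : β * lam * f' 0 / (γ * (μ + r)) ≤ 1) :
    ∀ n : ℤ, 0 ≤ n → n ≤ (M : ℤ) →
      Filter.Tendsto (fun k : ℕ => S k n) Filter.atTop (nhds (lam / γ)) ∧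
      Filter.Tendsto (fun k : ℕ => I k n) Filter.atTop (nhds 0) ∧
      Filter.Tendsto (fun k : ℕ => R k n) Filter.atTop (nhds 0) := by
  obtain ⟨hf0, hfpos⟩ := hA1
  obtain ⟨p, hpdef⟩ : ∃ p, p = 1 - α := ⟨_, rfl⟩
  obtain ⟨g, hgdef⟩ : ∃ g, g = Real.Gamma (2 - α) * Δt ^ α := ⟨_, rfl⟩
  obtain ⟨r1, hr1def⟩ : ∃ t, t = d1 * Real.Gamma (2 - α) * Δt ^ α / Δx ^ 2 := ⟨_, rfl⟩
  obtain ⟨r2, hr2def⟩ : ∃ t, t = d2 * Real.Gamma (2 - α) * Δt ^ α / Δx ^ 2 := ⟨_, rfl⟩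
  obtain ⟨r3, hr3def⟩ : ∃ t, t = d3 * Real.Gamma (2 - α) * Δt ^ α / Δx ^ 2 := ⟨_, rfl⟩
  rw [← hpdef, ← hr1def, ← hgdef] at hS
  rw [← hpdef, ← hr2def, ← hgdef] at hI
  rw [← hpdef, ← hr3def, ← hgdef] at hR
  have hp0 : 0 < p := by rw [hpdef]; linarith
  have hp1 : p < 1 := by rw [hpdef]; linarith
  have hΓ : 0 < Real.Gamma (2 - α) := Real.Gamma_pos_of_pos (by linarith)
  have hΔtα : 0 < Δt ^ α := Real.rpow_pos_of_pos hΔt α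
  have hg : 0 < g := by rw [hgdef]; exact mul_pos hΓ hΔtα
  have hr1p : 0 ≤ r1 := by
    rw [hr1def]; positivity
  have hr2p : 0 ≤ r2 := by rw [hr2def]; positivity
  have hr3p : 0 ≤ r3 := by rw [hr3def]; positivity
  set Fs := Finset.Icc (0:ℤ) (M:ℤ) with hFsdef
  have hmemFs : ∀ n : ℤ, n ∈ Fs ↔ 0 ≤ n ∧ n ≤ (M:ℤ) := fun n => Finset.mem_Icc
  have h0Fs : (0:ℤ) ∈ Fs := (hmemFs 0).2 ⟨le_refl _, by positivity⟩
  have hMFs : (M:ℤ) ∈ Fs := (hmemFs _).2 ⟨by positivity, le_refl _⟩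
  have hFs : Fs.Nonempty := ⟨0, h0Fs⟩
  -- rearranged scheme equations
  have hS' : ∀ (k:ℕ) (n:ℤ), n ∈ Fs → S (k+1) n * (1 + g*β*f (I k n) + g*γ)
      = memE p (fun m => S m n) k + g*lam
        + r1 * (S (k+1) (n-1) - 2*S (k+1) n + S (k+1) (n+1)) := by
    intro k n hn
    obtain ⟨h1, h2⟩ := (hmemFs n).1 hn
    have h := hS k n h1 h2
    simp only [memE]
    linear_combination h
  have hI' : ∀ (k:ℕ) (n:ℤ), n ∈ Fs → I (k+1) n * (1 + g*(μ+r))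
      = memE p (fun m => I m n) k + g*β*(S (k+1) n)*(f (I k n))
        + r2 * (I (k+1) (n-1) - 2*I (k+1) n + I (k+1) (n+1)) := by
    intro k n hn
    obtain ⟨h1, h2⟩ := (hmemFs n).1 hn
    have h := hI k n h1 h2
    simp only [memE]
    linear_combination h
  have hR' : ∀ (k:ℕ) (n:ℤ), n ∈ Fs → R (k+1) n * (1 + g*δ)
      = memE p (fun m => R m n) k + g*r*(I (k+1) n)
        + r3 * (R (k+1) (n-1) - 2*R (k+1) n + R (k+1) (n+1)) := by
    intro k n hn
    obtain ⟨h1, h2⟩ := (hmemFs n).1 hn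
    have h := hR k n h1 h2
    simp only [memE]
    linear_combination h
  -- neighbour bounds
  have hnbr_le : ∀ (X : ℕ → ℤ → ℝ), (∀ k : ℕ, X k (-1) = X k 0 ∧ X k ((M:ℤ)+1) = X k (M:ℤ)) →
      ∀ (k:ℕ) (W:ℝ), (∀ i ∈ Fs, X k i ≤ W) → ∀ n ∈ Fs, X k (n-1) ≤ W ∧ X k (n+1) ≤ W := by
    intro X hbc k W hW n hn
    obtain ⟨h1, h2⟩ := (hmemFs n).1 hn
    constructor
    · rcases eq_or_lt_of_le h1 with h | h
      · have : n - 1 = -1 := by omega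
        rw [this, (hbc k).1]; exact hW 0 h0Fs
      · exact hW _ ((hmemFs _).2 ⟨by omega, by omega⟩)
    · rcases eq_or_lt_of_le h2 with h | h
      · have : n + 1 = (M:ℤ) + 1 := by omega
        rw [this, (hbc k).2]; exact hW _ hMFs
      · exact hW _ ((hmemFs _).2 ⟨by omega, by omega⟩)
  have hnbr_ge : ∀ (X : ℕ → ℤ → ℝ), (∀ k : ℕ, X k (-1) = X k 0 ∧ X k ((M:ℤ)+1) = X k (M:ℤ)) →
      ∀ (k:ℕ) (W:ℝ), (∀ i ∈ Fs, W ≤ X k i) → ∀ n ∈ Fs, W ≤ X k (n-1) ∧ W ≤ X k (n+1) := by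
    intro X hbc k W hW n hn
    obtain ⟨h1, h2⟩ := (hmemFs n).1 hn
    constructor
    · rcases eq_or_lt_of_le h1 with h | h
      · have : n - 1 = -1 := by omega
        rw [this, (hbc k).1]; exact hW 0 h0Fs
      · exact hW _ ((hmemFs _).2 ⟨by omega, by omega⟩)
    · rcases eq_or_lt_of_le h2 with h | h
      · have : n + 1 = (M:ℤ) + 1 := by omega
        rw [this, (hbc k).2]; exact hW _ hMFs
      · exact hW _ ((hmemFs _).2 ⟨by omega, by omega⟩)
  -- positivity
  have hpos : ∀ (k m : ℕ), m ≤ k → ∀ n ∈ Fs, 0 < S m n ∧ 0 < I m n ∧ 0 < R m n := by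
    intro k
    induction k with
    | zero =>
      intro m hm n hn
      obtain ⟨h1, h2⟩ := (hmemFs n).1 hn
      have : m = 0 := Nat.le_zero.1 hm
      rw [this]
      exact ⟨hSinit n h1 h2, hIinit n h1 h2, hRinit n h1 h2⟩
    | succ k ih =>
      intro m hm n hn
      by_cases hmk : m ≤ k
      · exact ih m hmk n hn
      have hmeq : m = k + 1 := by omega
      subst hmeq
      have hSstep : ∀ n ∈ Fs, 0 < S (k+1) n := by
        obtain ⟨n₀, hn₀, hmin⟩ := Fs.exists_min_image (S (k+1)) hFs
        have hnb := hnbr_ge S hSbc (k+1) (S (k+1) n₀) (fun i hi => hmin i hi) n₀ hn₀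
        have hdif : 0 ≤ S (k+1) (n₀-1) - 2*S (k+1) n₀ + S (k+1) (n₀+1) := by
          linarith [hnb.1, hnb.2]
        have heq := hS' k n₀ hn₀
        have hmem : 0 < memE p (fun m => S m n₀) k :=
          memE_pos hp0 hp1 (ih 0 (Nat.zero_le k) n₀ hn₀).1 (fun m hmk' => (ih m hmk' n₀ hn₀).1.le)
        have hfI : 0 ≤ f (I k n₀) := (hfpos _ (ih k le_rfl n₀ hn₀).2.1).le
        have hco : 0 < 1 + g*β*f (I k n₀) + g*γ := by nlinarith [mul_pos hg hβ, mul_pos hg hγ]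
        have hrhs : 0 < S (k+1) n₀ * (1 + g*β*f (I k n₀) + g*γ) := by
          rw [heq]; nlinarith [mul_pos hg hlam, mul_nonneg hr1p hdif]
        have h0 : 0 < S (k+1) n₀ := by
          rcases mul_pos_iff.1 hrhs with ⟨h, _⟩ | ⟨_, h2⟩
          · exact h
          · linarith
        intro n' hn'; exact lt_of_lt_of_le h0 (hmin n' hn')
      have hIstep : ∀ n ∈ Fs, 0 < I (k+1) n := by
        obtain ⟨n₀, hn₀, hmin⟩ := Fs.exists_min_image (I (k+1)) hFs
        have hnb := hnbr_ge I hIbc (k+1) (I (k+1) n₀) (fun i hi => hmin i hi) n₀ hn₀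
        have hdif : 0 ≤ I (k+1) (n₀-1) - 2*I (k+1) n₀ + I (k+1) (n₀+1) := by
          linarith [hnb.1, hnb.2]
        have heq := hI' k n₀ hn₀
        have hmem : 0 < memE p (fun m => I m n₀) k :=
          memE_pos hp0 hp1 (ih 0 (Nat.zero_le k) n₀ hn₀).2.1 (fun m hmk' => (ih m hmk' n₀ hn₀).2.1.le)
        have hfI : 0 < f (I k n₀) := hfpos _ (ih k le_rfl n₀ hn₀).2.1
        have hSp : 0 < S (k+1) n₀ := hSstep n₀ hn₀
        have hco : 0 < 1 + g*(μ+r) := by nlinarith [mul_pos hg (show (0:ℝ) < μ + r by linarith)]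
        have hrhs : 0 < I (k+1) n₀ * (1 + g*(μ+r)) := by
          rw [heq]
          nlinarith [mul_pos (mul_pos (mul_pos hg hβ) hSp) hfI, mul_nonneg hr2p hdif]
        have h0 : 0 < I (k+1) n₀ := by
          rcases mul_pos_iff.1 hrhs with ⟨h, _⟩ | ⟨_, h2⟩
          · exact h
          · linarith
        intro n' hn'; exact lt_of_lt_of_le h0 (hmin n' hn')
      have hRstep : ∀ n ∈ Fs, 0 < R (k+1) n := by
        obtain ⟨n₀, hn₀, hmin⟩ := Fs.exists_min_image (R (k+1)) hFs
        have hnb := hnbr_ge R hRbc (k+1) (R (k+1) n₀) (fun i hi => hmin i hi) n₀ hn₀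
        have hdif : 0 ≤ R (k+1) (n₀-1) - 2*R (k+1) n₀ + R (k+1) (n₀+1) := by
          linarith [hnb.1, hnb.2]
        have heq := hR' k n₀ hn₀
        have hmem : 0 < memE p (fun m => R m n₀) k :=
          memE_pos hp0 hp1 (ih 0 (Nat.zero_le k) n₀ hn₀).2.2 (fun m hmk' => (ih m hmk' n₀ hn₀).2.2.le)
        have hIp : 0 < I (k+1) n₀ := hIstep n₀ hn₀
        have hco : 0 < 1 + g*δ := by nlinarith [mul_pos hg hδ]
        have hrhs : 0 < R (k+1) n₀ * (1 + g*δ) := by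
          rw [heq]
          nlinarith [mul_pos (mul_pos hg hr) hIp, mul_nonneg hr3p hdif]
        have h0 : 0 < R (k+1) n₀ := by
          rcases mul_pos_iff.1 hrhs with ⟨h, _⟩ | ⟨_, h2⟩
          · exact h
          · linarith
        intro n' hn'; exact lt_of_lt_of_le h0 (hmin n' hn')
      exact ⟨hSstep n hn, hIstep n hn, hRstep n hn⟩
  have hposS : ∀ k, ∀ n ∈ Fs, 0 < S k n := fun k n hn => (hpos k k le_rfl n hn).1
  have hposI : ∀ k, ∀ n ∈ Fs, 0 < I k n := fun k n hn => (hpos k k le_rfl n hn).2.1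
  have hposR : ∀ k, ∀ n ∈ Fs, 0 < R k n := fun k n hn => (hpos k k le_rfl n hn).2.2
  clear hS hI hR hSinit hIinit hRinit hpos
  -- telescoping sums over space
  have hinsert : ∀ (b : ℤ), 0 ≤ b → Finset.Icc (0:ℤ) (b+1) = insert (b+1) (Finset.Icc 0 b) := by
    intro b hb
    ext x
    simp only [Finset.mem_Icc, Finset.mem_insert]
    omega
  have tele1 : ∀ (X : ℤ → ℝ) (N : ℕ),
      (∑ n ∈ Finset.Icc (0:ℤ) (N:ℤ), (X (n-1) - X n)) = X (-1) - X (N:ℤ) := by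
    intro X N
    induction N with
    | zero => simp
    | succ N ihN =>
      have hcast : ((N:ℤ)+1 : ℤ) = ((N+1 : ℕ) : ℤ) := by push_cast; ring
      rw [← hcast, hinsert (N:ℤ) (by positivity),
        Finset.sum_insert (by simp [Finset.mem_Icc])]
      rw [ihN]
      have : ((N:ℤ) + 1 - 1) = (N:ℤ) := by ring
      rw [this]
      ring
  have tele2 : ∀ (X : ℤ → ℝ) (N : ℕ),
      (∑ n ∈ Finset.Icc (0:ℤ) (N:ℤ), (X (n+1) - X n)) = X ((N:ℤ)+1) - X 0 := by
    intro X N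
    induction N with
    | zero => simp
    | succ N ihN =>
      have hcast : ((N:ℤ)+1 : ℤ) = ((N+1 : ℕ) : ℤ) := by push_cast; ring
      rw [← hcast, hinsert (N:ℤ) (by positivity),
        Finset.sum_insert (by simp [Finset.mem_Icc])]
      rw [ihN]
      ring
  have hdiff0 : ∀ (X : ℤ → ℝ), X (-1) = X 0 → X ((M:ℤ)+1) = X (M:ℤ) →
      ∑ n ∈ Fs, (X (n-1) - 2*X n + X (n+1)) = 0 := by
    intro X hb1 hb2
    have hsplit : ∀ n : ℤ, X (n-1) - 2*X n + X (n+1) = (X (n-1) - X n) + (X (n+1) - X n) :=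
      fun n => by ring
    rw [Finset.sum_congr rfl (fun n _ => hsplit n), Finset.sum_add_distrib, hFsdef,
      tele1 X M, tele2 X M]
    rw [hb1, hb2]
    ring
  have hcard : ((Fs.card : ℕ) : ℝ) = (M:ℝ) + 1 := by
    rw [hFsdef, Int.card_Icc]
    have : ((M:ℤ) + 1 - 0).toNat = M + 1 := by omega
    rw [this]
    push_cast; ring
  -- summed quantities
  obtain ⟨sS, hsSdef⟩ : ∃ F : ℕ → ℝ, F = fun k => ∑ n ∈ Fs, S k n := ⟨_, rfl⟩
  obtain ⟨sI, hsIdef⟩ : ∃ F : ℕ → ℝ, F = fun k => ∑ n ∈ Fs, I k n := ⟨_, rfl⟩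
  obtain ⟨su, hsudef⟩ : ∃ F : ℕ → ℝ, F = fun k => sS k + sI k := ⟨_, rfl⟩
  have hsS_pos : ∀ k, 0 < sS k := by
    intro k; rw [hsSdef]
    exact Finset.sum_pos (fun n hn => hposS k n hn) hFs
  have hsI_pos : ∀ k, 0 < sI k := by
    intro k; rw [hsIdef]
    exact Finset.sum_pos (fun n hn => hposI k n hn) hFs
  have hsu_pos : ∀ k, 0 < su k := by
    intro k; rw [hsudef]; have := hsS_pos k; have := hsI_pos k; dsimp only; linarith
  -- summed equations
  have hs_eq : ∀ k, sS (k+1) = memE p sS k + g*lam*((M:ℝ)+1)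
      - g*β*(∑ n ∈ Fs, S (k+1) n * f (I k n)) - g*γ*sS (k+1) := by
    intro k
    have h1 : ∑ n ∈ Fs, (S (k+1) n - r1 * (S (k+1) (n-1) - 2*S (k+1) n + S (k+1) (n+1)))
        = ∑ n ∈ Fs, (memE p (fun m => S m n) k
            + (g*lam - g*β*(S (k+1) n * f (I k n)) - g*γ*S (k+1) n)) := by
      apply Finset.sum_congr rfl
      intro n hn
      have h := hS' k n hn
      linear_combination h
    rw [Finset.sum_sub_distrib, ← Finset.mul_sum,
      hdiff0 (S (k+1)) (hSbc (k+1)).1 (hSbc (k+1)).2, Finset.sum_add_distrib,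
      ← memE_sum] at h1
    have h2 : ∑ n ∈ Fs, (g*lam - g*β*(S (k+1) n * f (I k n)) - g*γ*S (k+1) n)
        = g*lam*((M:ℝ)+1) - g*β*(∑ n ∈ Fs, S (k+1) n * f (I k n)) - g*γ*sS (k+1) := by
      rw [Finset.sum_sub_distrib, Finset.sum_sub_distrib, Finset.sum_const,
        ← Finset.mul_sum, ← Finset.mul_sum, nsmul_eq_mul, hcard, hsSdef]
      ring
    rw [h2] at h1
    have h3 : memE p (fun m => ∑ n ∈ Fs, S m n) k = memE p sS k := by rw [hsSdef]
    rw [h3] at h1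
    have h4 : sS (k+1) = ∑ n ∈ Fs, S (k+1) n := by rw [hsSdef]
    rw [h4] at h1 ⊢
    linarith [h1]
  have hi_eq : ∀ k, sI (k+1) = memE p sI k
      + g*β*(∑ n ∈ Fs, S (k+1) n * f (I k n)) - g*(μ+r)*sI (k+1) := by
    intro k
    have h1 : ∑ n ∈ Fs, (I (k+1) n - r2 * (I (k+1) (n-1) - 2*I (k+1) n + I (k+1) (n+1)))
        = ∑ n ∈ Fs, (memE p (fun m => I m n) k
            + (g*β*(S (k+1) n * f (I k n)) - g*(μ+r)*I (k+1) n)) := by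
      apply Finset.sum_congr rfl
      intro n hn
      have h := hI' k n hn
      linear_combination h
    rw [Finset.sum_sub_distrib, ← Finset.mul_sum,
      hdiff0 (I (k+1)) (hIbc (k+1)).1 (hIbc (k+1)).2, Finset.sum_add_distrib,
      ← memE_sum] at h1
    have h2 : ∑ n ∈ Fs, (g*β*(S (k+1) n * f (I k n)) - g*(μ+r)*I (k+1) n)
        = g*β*(∑ n ∈ Fs, S (k+1) n * f (I k n)) - g*(μ+r)*sI (k+1) := by
      rw [Finset.sum_sub_distrib, ← Finset.mul_sum, ← Finset.mul_sum, hsIdef]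
    rw [h2] at h1
    have h3 : memE p (fun m => ∑ n ∈ Fs, I m n) k = memE p sI k := by rw [hsIdef]
    rw [h3] at h1
    have h4 : sI (k+1) = ∑ n ∈ Fs, I (k+1) n := by rw [hsIdef]
    rw [h4] at h1 ⊢
    linarith [h1]
  -- global bound K
  obtain ⟨cm, hcmdef⟩ : ∃ t, t = min γ (μ+r) := ⟨_, rfl⟩
  have hcm : 0 < cm := by rw [hcmdef]; exact lt_min hγ (by linarith)
  have hu_rec : ∀ k, su (k+1) * (1 + g*cm) ≤ memE p su k + g*lam*((M:ℝ)+1) := by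
    intro k
    have h1 := hs_eq k
    have h2 := hi_eq k
    have hmemadd : memE p su k = memE p sS k + memE p sI k := by
      rw [hsudef]
      exact memE_add p sS sI k
    have hsum : su (k+1) = sS (k+1) + sI (k+1) := by rw [hsudef]
    have hge1 : cm ≤ γ := by rw [hcmdef]; exact min_le_left _ _
    have hge2 : cm ≤ μ + r := by rw [hcmdef]; exact min_le_right _ _
    have hp1' := (hsS_pos (k+1)).le
    have hp2' := (hsI_pos (k+1)).le
    have key : g*γ*sS (k+1) + g*(μ+r)*sI (k+1) ≥ g*cm*(sS (k+1) + sI (k+1)) := by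
      nlinarith [mul_nonneg hg.le hp1', mul_nonneg hg.le hp2']
    rw [hsum, hmemadd]
    nlinarith [key]
  obtain ⟨K, hKdef⟩ : ∃ t, t = max (su 0) (g*lam*((M:ℝ)+1) / (g*cm)) := ⟨_, rfl⟩
  have hsuK : ∀ k, su k ≤ K := by
    rw [hKdef]
    exact memE_bound_seq hp0 hp1 (mul_pos hg hcm) (fun m => (hsu_pos m).le) hu_rec
  have hK0 : 0 < K := lt_of_lt_of_le (hsu_pos 0) (hsuK 0)
  have hSK : ∀ k, ∀ n ∈ Fs, S k n ≤ K := by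
    intro k n hn
    have h1 : S k n ≤ sS k := by
      rw [hsSdef]
      exact Finset.single_le_sum (fun i hi => (hposS k i hi).le) hn
    have h2 := hsI_pos k
    have h3 := hsuK k
    rw [hsudef] at h3
    dsimp only at h3
    linarith
  have hIK : ∀ k, ∀ n ∈ Fs, I k n ≤ K := by
    intro k n hn
    have h1 : I k n ≤ sI k := by
      rw [hsIdef]
      exact Finset.single_le_sum (fun i hi => (hposI k i hi).le) hn
    have h2 := hsS_pos k
    have h3 := hsuK k
    rw [hsudef] at h3
    dsimp only at h3
    linarith
  -- sup / inf sequences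
  obtain ⟨VS, hVSdef⟩ : ∃ F : ℕ → ℝ, F = fun k => Fs.sup' hFs (S k) := ⟨_, rfl⟩
  obtain ⟨wI, hwIdef⟩ : ∃ F : ℕ → ℝ, F = fun k => Fs.sup' hFs (I k) := ⟨_, rfl⟩
  obtain ⟨ρR, hρRdef⟩ : ∃ F : ℕ → ℝ, F = fun k => Fs.sup' hFs (R k) := ⟨_, rfl⟩
  obtain ⟨mS, hmSdef⟩ : ∃ F : ℕ → ℝ, F = fun k => Fs.inf' hFs (S k) := ⟨_, rfl⟩
  have hVSmem : ∀ k, ∃ n ∈ Fs, VS k = S k n := by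
    intro k; rw [hVSdef]
    obtain ⟨i, hi, he⟩ := Fs.exists_mem_eq_sup' hFs (S k)
    exact ⟨i, hi, he⟩
  have hwImem : ∀ k, ∃ n ∈ Fs, wI k = I k n := by
    intro k; rw [hwIdef]
    obtain ⟨i, hi, he⟩ := Fs.exists_mem_eq_sup' hFs (I k)
    exact ⟨i, hi, he⟩
  have hρRmem : ∀ k, ∃ n ∈ Fs, ρR k = R k n := by
    intro k; rw [hρRdef]
    obtain ⟨i, hi, he⟩ := Fs.exists_mem_eq_sup' hFs (R k)
    exact ⟨i, hi, he⟩
  have hmSmem : ∀ k, ∃ n ∈ Fs, mS k = S k n := by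
    intro k; rw [hmSdef]
    obtain ⟨i, hi, he⟩ := Fs.exists_mem_eq_inf' hFs (S k)
    exact ⟨i, hi, he⟩
  have hleVS : ∀ k, ∀ n ∈ Fs, S k n ≤ VS k := by
    intro k n hn; rw [hVSdef]; exact Finset.le_sup' (S k) hn
  have hlewI : ∀ k, ∀ n ∈ Fs, I k n ≤ wI k := by
    intro k n hn; rw [hwIdef]; exact Finset.le_sup' (I k) hn
  have hleρR : ∀ k, ∀ n ∈ Fs, R k n ≤ ρR k := by
    intro k n hn; rw [hρRdef]; exact Finset.le_sup' (R k) hn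
  have hmSle : ∀ k, ∀ n ∈ Fs, mS k ≤ S k n := by
    intro k n hn; rw [hmSdef]; exact Finset.inf'_le (S k) hn
  have hVS0 : ∀ k, 0 ≤ VS k := fun k => le_trans (hposS k 0 h0Fs).le (hleVS k 0 h0Fs)
  have hwI0 : ∀ k, 0 ≤ wI k := fun k => le_trans (hposI k 0 h0Fs).le (hlewI k 0 h0Fs)
  have hρR0 : ∀ k, 0 ≤ ρR k := fun k => le_trans (hposR k 0 h0Fs).le (hleρR k 0 h0Fs)
  have hmS0 : ∀ k, 0 ≤ mS k := by
    intro k; obtain ⟨n, hn, he⟩ := hmSmem k; rw [he]; exact (hposS k n hn).le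
  have hVSK : ∀ k, VS k ≤ K := by
    intro k; obtain ⟨n, hn, he⟩ := hVSmem k; rw [he]; exact hSK k n hn
  have hwIK : ∀ k, wI k ≤ K := by
    intro k; obtain ⟨n, hn, he⟩ := hwImem k; rw [he]; exact hIK k n hn
  have hmSK : ∀ k, mS k ≤ K := fun k => le_trans (hmSle k 0 h0Fs) (hSK k 0 h0Fs)
  -- monotonicity and continuity of f
  have hfc : ∀ y, 0 ≤ y → ContinuousWithinAt f (Set.Ici 0) y :=
    fun y hy => (hderiv y hy).continuousWithinAt
  have hfmono : StrictMonoOn f (Set.Ici 0) := by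
    apply strictMonoOn_of_hasDerivWithinAt_pos (convex_Ici 0)
      (fun x hx => (hderiv x hx).continuousWithinAt)
    · intro x hx
      rw [interior_Ici] at hx
      exact ((hderiv x (Set.mem_Ici.2 (le_of_lt hx))).mono interior_subset).mono
        (by rw [interior_Ici])
    · intro x hx
      rw [interior_Ici] at hx
      exact hA2.1 x (le_of_lt hx)
  have hfmono' : ∀ a b : ℝ, 0 ≤ a → a ≤ b → f a ≤ f b := by
    intro a b ha hab
    rcases eq_or_lt_of_le hab with h | h
    · rw [h]
    · exact (hfmono (Set.mem_Ici.2 ha) (Set.mem_Ici.2 (by linarith)) h).le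
  have hfnn : ∀ y : ℝ, 0 ≤ y → 0 ≤ f y := by
    intro y hy
    rcases eq_or_lt_of_le hy with h | h
    · rw [← h, hf0]
    · exact (hfpos y h).le
  -- max-principle recurrences
  have hVSrec : ∀ k, VS (k+1) * (1 + g*γ) ≤ memE p VS k + g*lam := by
    intro k
    obtain ⟨n₀, hn₀, hVn⟩ := hVSmem (k+1)
    have hnb := hnbr_le S hSbc (k+1) (VS (k+1)) (hleVS (k+1)) n₀ hn₀
    have hdif : S (k+1) (n₀-1) - 2*S (k+1) n₀ + S (k+1) (n₀+1) ≤ 0 := by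
      have h1 := hnb.1; have h2 := hnb.2
      rw [hVn] at h1 h2
      linarith
    have heq := hS' k n₀ hn₀
    have hmm : memE p (fun m => S m n₀) k ≤ memE p VS k :=
      memE_mono hp0 hp1 (fun m _ => hleVS m n₀ hn₀)
    have hterm : 0 ≤ g*β*f (I k n₀) * S (k+1) n₀ :=
      mul_nonneg (mul_nonneg (mul_nonneg hg.le hβ.le) (hfnn _ (hposI k n₀ hn₀).le))
        (hposS (k+1) n₀ hn₀).le
    have h3 : r1 * (S (k+1) (n₀-1) - 2*S (k+1) n₀ + S (k+1) (n₀+1)) ≤ 0 :=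
      mul_nonpos_iff.2 (Or.inl ⟨hr1p, hdif⟩)
    have heq2 : S (k+1) n₀ * (1 + g*γ) = memE p (fun m => S m n₀) k + g*lam
        + r1 * (S (k+1) (n₀-1) - 2*S (k+1) n₀ + S (k+1) (n₀+1))
        - g*β*f (I k n₀) * S (k+1) n₀ := by linear_combination heq
    rw [hVn, heq2]
    linarith
  have hwIrec : ∀ k, ∃ n ∈ Fs, wI (k+1) * (1 + g*(μ+r))
      ≤ memE p wI k + g*β*(S (k+1) n)*(f (I k n)) := by
    intro k
    obtain ⟨n₀, hn₀, hVn⟩ := hwImem (k+1)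
    refine ⟨n₀, hn₀, ?_⟩
    have hnb := hnbr_le I hIbc (k+1) (wI (k+1)) (hlewI (k+1)) n₀ hn₀
    have hdif : I (k+1) (n₀-1) - 2*I (k+1) n₀ + I (k+1) (n₀+1) ≤ 0 := by
      have h1 := hnb.1; have h2 := hnb.2
      rw [hVn] at h1 h2
      linarith
    have heq := hI' k n₀ hn₀
    have hmm : memE p (fun m => I m n₀) k ≤ memE p wI k :=
      memE_mono hp0 hp1 (fun m _ => hlewI m n₀ hn₀)
    have h3 : r2 * (I (k+1) (n₀-1) - 2*I (k+1) n₀ + I (k+1) (n₀+1)) ≤ 0 :=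
      mul_nonpos_iff.2 (Or.inl ⟨hr2p, hdif⟩)
    rw [hVn]
    calc I (k+1) n₀ * (1 + g*(μ+r))
        = memE p (fun m => I m n₀) k + g*β*(S (k+1) n₀)*(f (I k n₀))
          + r2 * (I (k+1) (n₀-1) - 2*I (k+1) n₀ + I (k+1) (n₀+1)) := by
          linear_combination heq
      _ ≤ memE p wI k + g*β*(S (k+1) n₀)*(f (I k n₀)) := by linarith
  have hρRrec : ∀ k, ρR (k+1) * (1 + g*δ) ≤ memE p ρR k + g*r*wI (k+1) := by
    intro k
    obtain ⟨n₀, hn₀, hVn⟩ := hρRmem (k+1)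
    have hnb := hnbr_le R hRbc (k+1) (ρR (k+1)) (hleρR (k+1)) n₀ hn₀
    have hdif : R (k+1) (n₀-1) - 2*R (k+1) n₀ + R (k+1) (n₀+1) ≤ 0 := by
      have h1 := hnb.1; have h2 := hnb.2
      rw [hVn] at h1 h2
      linarith
    have heq := hR' k n₀ hn₀
    have hmm : memE p (fun m => R m n₀) k ≤ memE p ρR k :=
      memE_mono hp0 hp1 (fun m _ => hleρR m n₀ hn₀)
    have h3 : r3 * (R (k+1) (n₀-1) - 2*R (k+1) n₀ + R (k+1) (n₀+1)) ≤ 0 :=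
      mul_nonpos_iff.2 (Or.inl ⟨hr3p, hdif⟩)
    have hIw : I (k+1) n₀ ≤ wI (k+1) := hlewI (k+1) n₀ hn₀
    have hgr : 0 ≤ g*r := mul_nonneg hg.le hr.le
    rw [hVn]
    calc R (k+1) n₀ * (1 + g*δ)
        = memE p (fun m => R m n₀) k + g*r*(I (k+1) n₀)
          + r3 * (R (k+1) (n₀-1) - 2*R (k+1) n₀ + R (k+1) (n₀+1)) := heq
      _ ≤ memE p ρR k + g*r*wI (k+1) := by nlinarith
  have hmSrec : ∀ k, memE p mS k + (g*lam - g*β*K*f (wI k)) ≤ mS (k+1) * (1 + g*γ) := by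
    intro k
    obtain ⟨n₀, hn₀, hVn⟩ := hmSmem (k+1)
    have hnb := hnbr_ge S hSbc (k+1) (mS (k+1)) (fun i hi => hmSle (k+1) i hi) n₀ hn₀
    have hdif : 0 ≤ S (k+1) (n₀-1) - 2*S (k+1) n₀ + S (k+1) (n₀+1) := by
      have h1 := hnb.1; have h2 := hnb.2
      rw [hVn] at *
      linarith
    have heq := hS' k n₀ hn₀
    have hmm : memE p mS k ≤ memE p (fun m => S m n₀) k :=
      memE_mono hp0 hp1 (fun m _ => hmSle m n₀ hn₀)
    have h3 : 0 ≤ r1 * (S (k+1) (n₀-1) - 2*S (k+1) n₀ + S (k+1) (n₀+1)) :=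
      mul_nonneg hr1p hdif
    have hIw : I k n₀ ≤ wI k := hlewI k n₀ hn₀
    have hfle : f (I k n₀) ≤ f (wI k) := hfmono' _ _ (hposI k n₀ hn₀).le hIw
    have hfnn' : 0 ≤ f (I k n₀) := hfnn _ (hposI k n₀ hn₀).le
    have hSle : S (k+1) n₀ ≤ K := hSK (k+1) n₀ hn₀
    have hS0' : 0 ≤ S (k+1) n₀ := (hposS (k+1) n₀ hn₀).le
    have hprod : g*β*(f (I k n₀) * S (k+1) n₀) ≤ g*β*(K * f (wI k)) := by
      have h5 : f (I k n₀) * S (k+1) n₀ ≤ K * f (wI k) := by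
        calc f (I k n₀) * S (k+1) n₀ ≤ f (wI k) * K :=
              mul_le_mul hfle hSle hS0' (hfnn _ (hwI0 k))
          _ = K * f (wI k) := by ring
      have h6 : 0 ≤ g*β := mul_nonneg hg.le hβ.le
      nlinarith
    have heq2 : S (k+1) n₀ * (1 + g*γ) = memE p (fun m => S m n₀) k + g*lam
        + r1 * (S (k+1) (n₀-1) - 2*S (k+1) n₀ + S (k+1) (n₀+1))
        - g*β*(f (I k n₀) * S (k+1) n₀) := by linear_combination heq
    rw [hVn] at *
    rw [heq2]
    linarith
  -- pointwise S bound
  have hSpt : ∀ k, ∀ n ∈ Fs, S (k+1) n * ((1 + 2*r1 + g*γ) + g*β*f (I k n))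
      ≤ 2*r1*VS (k+1) + memE p VS k + g*lam := by
    intro k n hn
    have hnb := hnbr_le S hSbc (k+1) (VS (k+1)) (hleVS (k+1)) n hn
    have hdif : S (k+1) (n-1) - 2*S (k+1) n + S (k+1) (n+1)
        ≤ 2*VS (k+1) - 2*S (k+1) n := by
      linarith [hnb.1, hnb.2]
    have heq := hS' k n hn
    have hmm : memE p (fun m => S m n) k ≤ memE p VS k :=
      memE_mono hp0 hp1 (fun m _ => hleVS m n hn)
    have h3 : r1 * (S (k+1) (n-1) - 2*S (k+1) n + S (k+1) (n+1))
        ≤ r1 * (2*VS (k+1) - 2*S (k+1) n) := by nlinarith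
    nlinarith [heq, hmm, h3]
  -- repackage the wI recurrence
  have hwIrec2 : ∀ k, ∃ s φ : ℝ, 0 ≤ s ∧ 0 ≤ φ ∧ φ ≤ f (wI k) ∧
      s * ((1 + 2*r1 + g*γ) + g*β*φ) ≤ 2*r1*VS (k+1) + memE p VS k + g*lam ∧
      wI (k+1) * (1 + g*(μ+r)) ≤ memE p wI k + g*β*s*φ := by
    intro k
    obtain ⟨n, hn, hineq⟩ := hwIrec k
    exact ⟨S (k+1) n, f (I k n), (hposS (k+1) n hn).le, hfnn _ (hposI k n hn).le,
      hfmono' _ _ (hposI k n hn).le (hlewI k n hn), hSpt k n hn, hineq⟩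
  -- bound for ρR
  have hρRrecK : ∀ k, ρR (k+1) * (1 + g*δ) ≤ memE p ρR k + g*r*K := by
    intro k
    have h1 := hρRrec k
    have h2 := hwIK (k+1)
    nlinarith [mul_nonneg hg.le hr.le]
  obtain ⟨KR, hKRdef⟩ : ∃ t, t = max (ρR 0) (g*r*K / (g*δ)) := ⟨_, rfl⟩
  have hρRKb : ∀ k, ρR k ≤ KR := by
    rw [hKRdef]
    exact memE_bound_seq hp0 hp1 (mul_pos hg hδ) hρR0 hρRrecK
  have hμr : 0 < μ + r := by linarith
  have hR0' : β * lam * f' 0 ≤ γ * (μ + r) := by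
    have hpos' : 0 < γ * (μ + r) := mul_pos hγ hμr
    rw [div_le_one hpos'] at hR0
    exact hR0
  obtain ⟨hwten, hVSls, hmSli, hρten⟩ :=
    final_part hp0 hp1 hg hlam hβ hγ hμr hr hδ hr1p hK0 hfc hf0 hfpos hfnn hfmono' hA3 hR0'
      hVS0 hVSK hwI0 hwIK hρR0 hρRKb hmS0 hmSK hVSrec hwIrec2 hρRrec hmSrec
  -- conclusions
  intro n h1 h2
  have hn : n ∈ Fs := (hmemFs n).2 ⟨h1, h2⟩
  refine ⟨?_, ?_, ?_⟩
  · have hlsn : Filter.limsup (fun k => S k n) atTop ≤ lam/γ := by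
      refine le_trans (Filter.limsup_le_limsup
        (Filter.Eventually.of_forall (fun k => hleVS k n hn))
        (Filter.isCoboundedUnder_le_of_le atTop (fun k => (hposS k n hn).le))
        (Filter.isBoundedUnder_of ⟨K, hVSK⟩)) hVSls
    have hlin : lam/γ ≤ Filter.liminf (fun k => S k n) atTop := by
      refine le_trans hmSli (Filter.liminf_le_liminf
        (Filter.Eventually.of_forall (fun k => hmSle k n hn))
        (Filter.isBoundedUnder_of ⟨0, hmS0⟩)
        (Filter.isCoboundedUnder_ge_of_le atTop (fun k => hSK k n hn)))
    exact tendsto_of_le_liminf_of_limsup_le hlin hlsn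
      (Filter.isBoundedUnder_of ⟨K, fun k => hSK k n hn⟩)
      (Filter.isBoundedUnder_of ⟨0, fun k => (hposS k n hn).le⟩)
  · exact squeeze_zero (fun k => (hposI k n hn).le) (fun k => hlewI k n hn) hwten
  · exact squeeze_zero (fun k => (hposR k n hn).le) (fun k => hleρR k n hn) hρten
end
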